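/- arXiv:2411.13439 — 5 statements merged into one kernel-verified Lean document; each statement's English description precedes it below -/
import Mathlib

section
/- Let G be a finite connected simple graph and let v be a vertex of G that is not a cut-vertex. Then d_G(u,w) = d_{G−v}(u,w) holds for all pairs of vertices u,w ∈ V(G)∖{v} if and only if d_{G−v}(u,w) ≤ 2 for all pairs of neighbours u,w of v in G. -/
open Finset

private lemma aux_dist_le {V : Type*} [DecidableEq V]
    (G : SimpleGraph V) (v : V)
    (hv : (G.induce ({v}ᶜ : Set V)).Connected)
    (H : ∀ u w : ({v}ᶜ : Set V), G.Adj v u → G.Adj v w →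
      (G.induce ({v}ᶜ : Set V)).dist u w ≤ 2) :
    ∀ n : ℕ, ∀ (a b : V) (ha : a ∈ ({v}ᶜ : Set V)) (hb : b ∈ ({v}ᶜ : Set V))
      (p : G.Walk a b), p.length ≤ n →
      (G.induce ({v}ᶜ : Set V)).dist ⟨a, ha⟩ ⟨b, hb⟩ ≤ p.length := by
  intro n
  induction n using Nat.strong_induction_on with
  | _ n IH =>
    intro a b ha hb p hn
    cases p with
    | nil => simp
    | @cons _ x _ h q =>
      by_cases hx : x = v
      · subst x
        cases q with
        | nil =>
          exact absurd rfl hb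
        | @cons _ y _ h2 q' =>
          have hy : y ∈ ({v}ᶜ : Set V) := by
            simp only [Set.mem_compl_iff, Set.mem_singleton_iff]
            exact fun hyv => G.irrefl (hyv ▸ h2).symm
          have hyv : y ≠ v := hy
          have h1 : (G.induce ({v}ᶜ : Set V)).dist ⟨a, ha⟩ ⟨y, hy⟩ ≤ 2 := H ⟨a, ha⟩ ⟨y, hy⟩ h.symm h2
          have h2' : (G.induce ({v}ᶜ : Set V)).dist ⟨y, hy⟩ ⟨b, hb⟩ ≤ q'.length := by
            apply IH q'.length _ y b hy hb q' le_rfl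
            simp only [SimpleGraph.Walk.length_cons] at hn
            omega
          calc (G.induce ({v}ᶜ : Set V)).dist ⟨a, ha⟩ ⟨b, hb⟩
              ≤ (G.induce ({v}ᶜ : Set V)).dist ⟨a, ha⟩ ⟨y, hy⟩
                + (G.induce ({v}ᶜ : Set V)).dist ⟨y, hy⟩ ⟨b, hb⟩ := hv.dist_triangle
            _ ≤ 2 + q'.length := Nat.add_le_add h1 h2'
            _ = (SimpleGraph.Walk.cons h (SimpleGraph.Walk.cons h2 q')).length := by
                simp only [SimpleGraph.Walk.length_cons]; omega
      · have hxm : x ∈ ({v}ᶜ : Set V) := hx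
        have h1 : (G.induce ({v}ᶜ : Set V)).dist ⟨a, ha⟩ ⟨x, hxm⟩ ≤ 1 := by
          have hadj : (G.induce ({v}ᶜ : Set V)).Adj ⟨a, ha⟩ ⟨x, hxm⟩ := by
            simpa using h
          simpa using SimpleGraph.dist_le hadj.toWalk
        have h2' : (G.induce ({v}ᶜ : Set V)).dist ⟨x, hxm⟩ ⟨b, hb⟩ ≤ q.length := by
          apply IH q.length _ x b hxm hb q le_rfl
          simp only [SimpleGraph.Walk.length_cons] at hn
          omega
        calc (G.induce ({v}ᶜ : Set V)).dist ⟨a, ha⟩ ⟨b, hb⟩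
            ≤ (G.induce ({v}ᶜ : Set V)).dist ⟨a, ha⟩ ⟨x, hxm⟩
              + (G.induce ({v}ᶜ : Set V)).dist ⟨x, hxm⟩ ⟨b, hb⟩ := hv.dist_triangle
          _ ≤ 1 + q.length := Nat.add_le_add h1 h2'
          _ = (SimpleGraph.Walk.cons h q).length := by simp only [SimpleGraph.Walk.length_cons]; omega

/-- If `v` is not a cut-vertex of the connected graph `G`, then distances in `G`
between vertices other than `v` all agree with those in `G - v` if and only if any
two neighbours of `v` are at distance at most `2` in `G - v`. -/
theorem dist_deleteVertex_eq_iff {V : Type*} [Fintype V] [DecidableEq V]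
    (G : SimpleGraph V) (hG : G.Connected) (v : V)
    (hv : (G.induce ({v}ᶜ : Set V)).Connected) :
    (∀ u w : ({v}ᶜ : Set V), G.dist (u : V) (w : V) = (G.induce ({v}ᶜ : Set V)).dist u w) ↔
    (∀ u w : ({v}ᶜ : Set V), G.Adj v u → G.Adj v w →
      (G.induce ({v}ᶜ : Set V)).dist u w ≤ 2) := by
  constructor
  · intro hEq u w hu hw
    rw [← hEq u w]
    calc G.dist (u : V) (w : V)
        ≤ (SimpleGraph.Walk.cons hu.symm (SimpleGraph.Walk.cons hw SimpleGraph.Walk.nil)).length :=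
          SimpleGraph.dist_le _
      _ = 2 := rfl
  · intro H u w
    apply le_antisymm
    · -- dist_G ≤ dist_G' : map a shortest walk of G' into G
      obtain ⟨q, hq⟩ := hv.exists_walk_length_eq_dist u w
      calc G.dist (u : V) (w : V)
          ≤ (q.map (SimpleGraph.Embedding.induce ({v}ᶜ : Set V)).toHom).length :=
            SimpleGraph.dist_le _
        _ = q.length := q.length_map _
        _ = _ := hq
    · obtain ⟨p, hp⟩ := hG.exists_walk_length_eq_dist (u : V) (w : V)
      rw [← hp]
      exact aux_dist_le G v hv H p.length u w u.2 w.2 p le_rfl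
end

section
/- Let n, m be integers with n ≥ 2 and n−1 ≤ m ≤ C(n,2), and let G be a finite connected simple graph with n vertices and m edges. Then for every nondecreasing function f : ℕ → ℝ, W_f(G) ≤ W_f(PK_{n,m}). -/
open Finset

/-- The distance between the two endpoints of an unordered pair of vertices. -/
noncomputable def pairDist {V : Type*} (G : SimpleGraph V) : Sym2 V → ℕ :=
  Sym2.lift ⟨G.dist, fun _ _ => SimpleGraph.dist_comm⟩

/-- The generalised Wiener index `W_f`: the sum of `f` of the distances over all
unordered pairs of distinct vertices. -/
noncomputable def wienerF {V : Type*} [Fintype V] [DecidableEq V]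
    (G : SimpleGraph V) (f : ℕ → ℝ) : ℝ :=
  ∑ p ∈ Finset.univ.filter (fun p : Sym2 V => ¬ p.IsDiag), f (pairDist G p)

/-- The path-complete graph `PK_{n,q,t}`: a complete graph on the vertices
`0, …, q-1`, a path `q, q+1, …, n-1`, and the end `q` of the path joined to the
`t` clique vertices `q-t, …, q-1`. -/
def pathComplete (n q t : ℕ) : SimpleGraph (Fin n) where
  Adj i j := i ≠ j ∧
    (max i.val j.val < q ∨
     (max i.val j.val = min i.val j.val + 1 ∧ q ≤ max i.val j.val) ∨
     (max i.val j.val = q ∧ q - t ≤ min i.val j.val))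
  symm := by
    constructor
    rintro i j ⟨h1, h2⟩
    refine ⟨h1.symm, ?_⟩
    rwa [max_comm j.val i.val, min_comm j.val i.val]
  loopless := by constructor; rintro i ⟨h, _⟩; exact h rfl


open SimpleGraph

section Helpers
variable {V : Type*}

private lemma WF.dist_getVert_le {G : SimpleGraph V} (hc : G.Connected) {u v : V}
    (w : G.Walk u v) (a : ℕ) : ∀ b, a ≤ b → G.dist (w.getVert a) (w.getVert b) ≤ b - a := by
  intro b
  induction b with
  | zero =>
    intro h
    have ha : a = 0 := by omega
    subst ha; simp
  | succ b ih =>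
    intro hab
    rcases Nat.eq_or_lt_of_le hab with h | h
    · subst h; simp
    · have hab' : a ≤ b := by omega
      by_cases hb : b < w.length
      · have hadj := w.adj_getVert_succ hb
        have h1 := hc.dist_triangle (u := w.getVert a) (v := w.getVert b) (w := w.getVert (b+1))
        have h2 : G.dist (w.getVert b) (w.getVert (b+1)) = 1 := dist_eq_one_iff_adj.mpr hadj
        have := ih hab'
        omega
      · have : w.getVert (b+1) = w.getVert b := by
          rw [w.getVert_of_length_le (by omega), w.getVert_of_length_le (by omega)]
        rw [this]
        have := ih hab'
        omega

private lemma WF.dist_getVert_shortest {G : SimpleGraph V} (hc : G.Connected) {u v : V}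
    (w : G.Walk u v) (hw : w.length = G.dist u v) {a b : ℕ} (hab : a ≤ b) (hb : b ≤ w.length) :
    G.dist (w.getVert a) (w.getVert b) = b - a := by
  have h1 : G.dist (w.getVert a) (w.getVert b) ≤ b - a := WF.dist_getVert_le hc w a b hab
  have h2 : G.dist u (w.getVert a) ≤ a - 0 := by
    have := WF.dist_getVert_le hc w 0 a (Nat.zero_le a); rwa [w.getVert_zero] at this
  have h3 : G.dist (w.getVert b) v ≤ w.length - b := by
    have := WF.dist_getVert_le hc w b w.length hb; rwa [w.getVert_length] at this
  have h4 := hc.dist_triangle (u := u) (v := w.getVert a) (w := w.getVert b)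
  have h5 := hc.dist_triangle (u := u) (v := w.getVert b) (w := v)
  omega

private lemma WF.dist_getVert_left {G : SimpleGraph V} (hc : G.Connected) {u v : V}
    (w : G.Walk u v) (hw : w.length = G.dist u v) {b : ℕ} (hb : b ≤ w.length) :
    G.dist u (w.getVert b) = b := by
  have := WF.dist_getVert_shortest hc w hw (Nat.zero_le b) hb
  rwa [w.getVert_zero, Nat.sub_zero] at this

/-- Discrete intermediate value: a ℕ-sequence increasing by at most 1 per step hits
every value between. -/
private lemma WF.nat_ivt (a : ℕ → ℕ) (hstep : ∀ j, a (j+1) ≤ a j + 1) {lo hi v : ℕ}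
    (hl : lo ≤ hi) (h1 : a lo ≤ v) (h2 : v ≤ a hi) : ∃ j, lo ≤ j ∧ j ≤ hi ∧ a j = v := by
  classical
  let P : ℕ → Prop := fun j => lo ≤ j ∧ a j ≤ v
  have hPlo : P lo := ⟨le_rfl, h1⟩
  have hPj0 : P (Nat.findGreatest P hi) := Nat.findGreatest_spec hl hPlo
  have hj0hi : Nat.findGreatest P hi ≤ hi := Nat.findGreatest_le hi
  rcases Nat.eq_or_lt_of_le hPj0.2 with he | hlt
  · exact ⟨Nat.findGreatest P hi, hPj0.1, hj0hi, he⟩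
  · exfalso
    have hj0hi' : Nat.findGreatest P hi < hi := by
      rcases Nat.eq_or_lt_of_le hj0hi with h | h
      · exfalso
        have : a (Nat.findGreatest P hi) = a hi := by rw [h]
        omega
      · exact h
    have hnot : ¬ P (Nat.findGreatest P hi + 1) :=
      Nat.findGreatest_is_greatest (Nat.lt_succ_self _) (by omega)
    have hle : a (Nat.findGreatest P hi + 1) ≤ v := le_trans (hstep _) (by omega)
    exact hnot ⟨by omega, hle⟩

/-- Build a finset of witnesses indexed by distances. -/
private lemma WF.witness_finset [DecidableEq V] (f : V → ℕ) (P : V → Prop) (T : Finset ℕ)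
    (h : ∀ v ∈ T, ∃ y, f y = v ∧ P y) :
    ∃ S : Finset V, S.card = T.card ∧ ∀ y ∈ S, f y ∈ T ∧ P y := by
  classical
  have hch : ∀ z : {v // v ∈ T}, ∃ y, f y = z.1 ∧ P y := fun z => h z.1 z.2
  choose g hg1 hg2 using hch
  refine ⟨T.attach.image g, ?_, ?_⟩
  · rw [Finset.card_image_of_injective _ ?_, Finset.card_attach]
    intro z z' hzz
    have : f (g z) = f (g z') := by rw [hzz]
    rw [hg1 z, hg1 z'] at this
    exact Subtype.ext this
  · intro y hy
    rcases Finset.mem_image.mp hy with ⟨z, _, rfl⟩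
    exact ⟨(hg1 z) ▸ z.2, hg2 z⟩

/-- Lipschitz potentials lower-bound distances. -/
private lemma WF.pot_le {G : SimpleGraph V} (hc : G.Connected) (φ : V → ℕ)
    (hφ : ∀ a b, G.Adj a b → φ a ≤ φ b + 1) (u v : V) : φ u ≤ φ v + G.dist u v := by
  obtain ⟨w, hw⟩ := hc.exists_walk_length_eq_dist u v
  rw [← hw]; clear hw
  induction w with
  | nil => simp
  | cons hadj w ih =>
    have := hφ _ _ hadj
    simp only [SimpleGraph.Walk.length_cons]
    omega

private lemma WF.perX [DecidableEq V] {G : SimpleGraph V} (hc : G.Connected) {k : ℕ}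
    {u0 v0 : V} (γ : G.Walk u0 v0) (hγ : γ.length = G.dist u0 v0) (hE : k ≤ γ.length)
    {x : V} (hx : x ∉ γ.support) :
    ∃ S : Finset V, k - 2 ≤ S.card ∧ ∀ y ∈ S,
      2 ≤ G.dist x y ∧ G.dist x y ≤ k - 1 ∧
        (y ∈ γ.support ∨ G.dist u0 y + 2 ≤ G.dist u0 x) := by
  classical
  by_cases hk : k ≤ 2
  · exact ⟨∅, by simp; omega, by simp⟩
  push_neg at hk
  have hxu0 : x ≠ u0 := fun h => hx (h ▸ γ.start_mem_support)
  have hi1 : 1 ≤ G.dist u0 x := by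
    have := hc.pos_dist_of_ne (Ne.symm hxu0); omega
  obtain ⟨δ, hδ⟩ := hc.exists_walk_length_eq_dist u0 x
  have hδp : ∀ p, p ≤ G.dist u0 x → G.dist u0 (δ.getVert p) = p := by
    intro p hp; exact WF.dist_getVert_left hc δ hδ (by omega)
  have hδx : ∀ p, p ≤ G.dist u0 x → G.dist x (δ.getVert p) = G.dist u0 x - p := by
    intro p hp
    have h := WF.dist_getVert_shortest hc δ hδ (a := p) (b := δ.length) (by omega) le_rfl
    rw [δ.getVert_length] at h
    rw [SimpleGraph.dist_comm, h, hδ]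
  have hdwit : ∀ v, 2 ≤ v → v ≤ G.dist u0 x →
      ∃ y, G.dist x y = v ∧ G.dist u0 y + 2 ≤ G.dist u0 x := by
    intro v hv1 hv2
    refine ⟨δ.getVert (G.dist u0 x - v), ?_, ?_⟩
    · have h := hδx (G.dist u0 x - v) (by omega); omega
    · have h := hδp (G.dist u0 x - v) (by omega); omega
  set E := γ.length with hEdef
  set i := G.dist u0 x with hidef
  set a : ℕ → ℕ := fun j => G.dist x (γ.getVert j) with hadef
  have haval : ∀ j, a j = G.dist x (γ.getVert j) := fun _ => rfl
  have hmem : ∀ j, j ≤ E → γ.getVert j ∈ γ.support := by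
    intro j hj; exact SimpleGraph.Walk.mem_support_iff_exists_getVert.mpr ⟨j, rfl, hj⟩
  have hapos : ∀ j, j ≤ E → 1 ≤ a j := by
    intro j hj
    have hne : x ≠ γ.getVert j := fun h => hx (h ▸ hmem j hj)
    have := hc.pos_dist_of_ne hne
    rw [haval j]; omega
  have hstep : ∀ j, a (j+1) ≤ a j + 1 := by
    intro j
    by_cases hj : j < E
    · have hadj := γ.adj_getVert_succ hj
      have h1 := hc.dist_triangle (u := x) (v := γ.getVert j) (w := γ.getVert (j+1))
      have h2 : G.dist (γ.getVert j) (γ.getVert (j+1)) = 1 := dist_eq_one_iff_adj.mpr hadj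
      rw [haval j, haval (j+1)]; omega
    · have heq : γ.getVert (j+1) = γ.getVert j := by
        rw [γ.getVert_of_length_le (by omega), γ.getVert_of_length_le (by omega)]
      rw [haval (j+1), haval j, heq]
      omega
  have ha0 : a 0 = i := by
    rw [haval 0, γ.getVert_zero, SimpleGraph.dist_comm]
  have hdu : ∀ j, j ≤ E → G.dist u0 (γ.getVert j) = j := by
    intro j hj; exact WF.dist_getVert_left hc γ hγ (by omega)
  have haE : E - i ≤ a E := by
    have h1 := hc.dist_triangle (u := u0) (v := x) (w := γ.getVert E)
    have h2 : G.dist u0 (γ.getVert E) = E := hdu E le_rfl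
    rw [haval E]; omega
  have htri : ∀ j, j ≤ E → i ≤ j + a j := by
    intro j hj
    have h1 := hc.dist_triangle (u := u0) (v := γ.getVert j) (w := x)
    have h2 := hdu j hj
    have h3 : G.dist (γ.getVert j) x = a j := by rw [haval j, SimpleGraph.dist_comm]
    omega
  by_cases hcase : k - 1 ≤ i
  · -- Case 1 : deep vertex, use δ only
    have hwit : ∀ v ∈ Finset.Icc 2 (k-1), ∃ y, G.dist x y = v ∧
        G.dist u0 y + 2 ≤ G.dist u0 x := by
      intro v hv
      rw [Finset.mem_Icc] at hv
      exact hdwit v hv.1 (by omega)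
    obtain ⟨S, hScard, hSmem⟩ := WF.witness_finset (G.dist x ·)
      (fun y => G.dist u0 y + 2 ≤ G.dist u0 x) (Finset.Icc 2 (k-1)) hwit
    refine ⟨S, ?_, ?_⟩
    · rw [hScard, Nat.card_Icc]; omega
    · intro y hy
      obtain ⟨hfy, hPy⟩ := hSmem y hy
      rw [Finset.mem_Icc] at hfy
      exact ⟨hfy.1, hfy.2, Or.inr hPy⟩
  · -- Case 2 : shallow vertex
    push_neg at hcase
    have hik : i ≤ k - 2 := by omega
    by_cases hone : ∃ j, j ≤ E ∧ a j = 1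
    · -- Case 2a
      obtain ⟨js, hjsE, hjs1⟩ := hone
      have hjsi : i ≤ js + 1 := by have := htri js hjsE; omega
      have hM3 : 2 ≤ min (k-1) (E - i) := by
        have h2 : 2 ≤ E - i := by omega
        omega
      have hwit₁ : ∀ v ∈ Finset.Icc 2 i, ∃ y, G.dist x y = v ∧ G.dist u0 y + 2 ≤ i := by
        intro v hv
        rw [Finset.mem_Icc] at hv
        exact hdwit v hv.1 hv.2
      have hwit₂ : ∀ v ∈ Finset.Icc 2 (min (k-1) (E - i)), ∃ y, G.dist x y = v ∧
          (y ∈ γ.support ∧ i ≤ G.dist u0 y + 1) := by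
        intro v hv
        rw [Finset.mem_Icc] at hv
        have hvE : v ≤ a E := by
          have := min_le_right (k-1) (E-i); omega
        obtain ⟨j, hj1, hj2, hj3⟩ := WF.nat_ivt a hstep (lo := js) (hi := E) (v := v)
          hjsE (by omega) hvE
        refine ⟨γ.getVert j, by rw [← haval j, hj3], hmem j hj2, ?_⟩
        rw [hdu j hj2]; omega
      obtain ⟨S₁, hS₁card, hS₁mem⟩ := WF.witness_finset (G.dist x ·)
        (fun y => G.dist u0 y + 2 ≤ i) (Finset.Icc 2 i) hwit₁
      obtain ⟨S₂, hS₂card, hS₂mem⟩ := WF.witness_finset (G.dist x ·)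
        (fun y => y ∈ γ.support ∧ i ≤ G.dist u0 y + 1) (Finset.Icc 2 (min (k-1) (E - i)))
        hwit₂
      have hdisj : Disjoint S₁ S₂ := by
        rw [Finset.disjoint_left]
        intro y hy1 hy2
        have h1 := (hS₁mem y hy1).2
        have h2 := (hS₂mem y hy2).2.2
        omega
      refine ⟨S₁ ∪ S₂, ?_, ?_⟩
      · rw [Finset.card_union_of_disjoint hdisj, hS₁card, hS₂card,
          Nat.card_Icc, Nat.card_Icc]
        have h1 := min_le_left (k-1) (E-i)
        have h2 := min_le_right (k-1) (E-i)
        have h3 : min (k-1) (E-i) = k-1 ∨ min (k-1) (E-i) = E - i := by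
          rcases le_total (k-1) (E-i) with h | h
          · left; exact min_eq_left h
          · right; exact min_eq_right h
        omega
      · intro y hy
        rcases Finset.mem_union.mp hy with hy | hy
        · obtain ⟨hf, hP⟩ := hS₁mem y hy
          rw [Finset.mem_Icc] at hf
          exact ⟨hf.1, by omega, Or.inr (by omega)⟩
        · obtain ⟨hf, hP⟩ := hS₂mem y hy
          rw [Finset.mem_Icc] at hf
          have := min_le_left (k-1) (E-i)
          exact ⟨hf.1, by omega, Or.inl hP.1⟩
    · push_neg at hone
      have htwo : ∀ j, j ≤ E → 2 ≤ a j := by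
        intro j hj
        have := hapos j hj
        have := hone j hj
        omega
      by_cases hbig : ∃ j, j ≤ E ∧ k ≤ a j
      · -- Case 2b-ii
        obtain ⟨j₀, hj₀⟩ : ∃ j₀, (Nat.find hbig) = j₀ + 1 := by
          refine ⟨Nat.find hbig - 1, ?_⟩
          have hspec := Nat.find_spec hbig
          have h0 : Nat.find hbig ≠ 0 := by
            intro h
            rw [h] at hspec
            omega
          omega
        have hspec := Nat.find_spec hbig
        rw [hj₀] at hspec
        have hj₀E : j₀ ≤ E := by omega
        have hj₀small : a j₀ ≤ k - 1 := by
          have hmin := Nat.find_min hbig (m := j₀) (by omega)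
          push_neg at hmin
          have := hmin hj₀E
          omega
        have hj₀eq : a j₀ = k - 1 := by
          have := hstep j₀
          omega
        have hwit₁ : ∀ v ∈ Finset.Icc 2 (i-1), ∃ y, G.dist x y = v ∧
            G.dist u0 y + 2 ≤ i := by
          intro v hv
          rw [Finset.mem_Icc] at hv
          exact hdwit v hv.1 (by omega)
        have hwit₂ : ∀ v ∈ Finset.Icc (max i 2) (k-1), ∃ y, G.dist x y = v ∧
            y ∈ γ.support := by
          intro v hv
          rw [Finset.mem_Icc] at hv
          have hilb : i ≤ v := le_trans (le_max_left _ _) hv.1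
          obtain ⟨j, hj1, hj2, hj3⟩ := WF.nat_ivt a hstep (lo := 0) (hi := j₀) (v := v)
            (Nat.zero_le _) (by omega) (by omega)
          exact ⟨γ.getVert j, by rw [← haval j, hj3], hmem j (by omega)⟩
        obtain ⟨S₁, hS₁card, hS₁mem⟩ := WF.witness_finset (G.dist x ·)
          (fun y => G.dist u0 y + 2 ≤ i) (Finset.Icc 2 (i-1)) hwit₁
        obtain ⟨S₂, hS₂card, hS₂mem⟩ := WF.witness_finset (G.dist x ·)
          (fun y => y ∈ γ.support) (Finset.Icc (max i 2) (k-1)) hwit₂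
        have hdisj : Disjoint S₁ S₂ := by
          rw [Finset.disjoint_left]
          intro y hy1 hy2
          have h1 := (hS₁mem y hy1).1
          have h2 := (hS₂mem y hy2).1
          rw [Finset.mem_Icc] at h1 h2
          have : i ≤ max i 2 := le_max_left _ _
          have : 2 ≤ max i 2 := le_max_right _ _
          omega
        refine ⟨S₁ ∪ S₂, ?_, ?_⟩
        · rw [Finset.card_union_of_disjoint hdisj, hS₁card, hS₂card,
            Nat.card_Icc, Nat.card_Icc]
          have h1 : max i 2 = i ∨ max i 2 = 2 := by
            rcases le_total i 2 with h | h
            · right; exact max_eq_right h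
            · left; exact max_eq_left h
          omega
        · intro y hy
          rcases Finset.mem_union.mp hy with hy | hy
          · obtain ⟨hf, hP⟩ := hS₁mem y hy
            rw [Finset.mem_Icc] at hf
            exact ⟨hf.1, by omega, Or.inr (by omega)⟩
          · obtain ⟨hf, hP⟩ := hS₂mem y hy
            rw [Finset.mem_Icc] at hf
            have : 2 ≤ max i 2 := le_max_right _ _
            exact ⟨by omega, hf.2, Or.inl hP⟩
      · -- Case 2b-i : all of γ works
        push_neg at hbig
        refine ⟨γ.support.toFinset, ?_, ?_⟩
        · have hnd : γ.support.Nodup :=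
            (SimpleGraph.Walk.isPath_of_length_eq_dist γ hγ).support_nodup
          rw [List.toFinset_card_of_nodup hnd, SimpleGraph.Walk.length_support]
          omega
        · intro y hy
          rw [List.mem_toFinset] at hy
          obtain ⟨j, hj1, hj2⟩ := SimpleGraph.Walk.mem_support_iff_exists_getVert.mp hy
          have h2 := htwo j hj2
          have h3 := hbig j hj2
          have h4 : a j = G.dist x y := by rw [haval j, hj1]
          exact ⟨by omega, by omega, Or.inl hy⟩

lemma WF.pairDist_mk {G : SimpleGraph V} (a b : V) : pairDist G s(a, b) = G.dist a b := rfl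

private lemma WF.core [Fintype V] [DecidableEq V] {G : SimpleGraph V} (hc : G.Connected)
    {k : ℕ} (hk : 2 ≤ k) {u0 v0 : V} (hd : k ≤ G.dist u0 v0) :
    ∑ d ∈ Finset.Icc 2 (k-1), (Fintype.card V - d) ≤
      (Finset.univ.filter
        (fun p : Sym2 V => 2 ≤ pairDist G p ∧ pairDist G p ≤ k-1)).card := by
  classical
  obtain ⟨γ, hγ⟩ := hc.exists_walk_length_eq_dist u0 v0
  have hE : k ≤ γ.length := by omega
  have hnd : γ.support.Nodup :=
    (SimpleGraph.Walk.isPath_of_length_eq_dist γ hγ).support_nodup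
  have hΓcard : γ.support.toFinset.card = γ.length + 1 := by
    rw [List.toFinset_card_of_nodup hnd, SimpleGraph.Walk.length_support]
  have hΓn : γ.length + 1 ≤ Fintype.card V := by
    rw [← hΓcard]
    exact le_trans (Finset.card_le_card (Finset.subset_univ _)) (le_of_eq (Finset.card_univ))
  have hgetleft : ∀ b, b ≤ γ.length → G.dist u0 (γ.getVert b) = b :=
    fun b hb => WF.dist_getVert_left hc γ hγ hb
  have hgetVert_inj : ∀ a b, a ≤ γ.length → b ≤ γ.length →
      γ.getVert a = γ.getVert b → a = b := by
    intro a b ha hb heq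
    have h1 := hgetleft a ha
    have h2 := hgetleft b hb
    rw [heq] at h1
    omega
  -- family A : pairs inside γ
  set A : Finset (Sym2 V) :=
    ((Finset.Icc 2 (k-1)).sigma (fun d => Finset.range (γ.length + 1 - d))).image
      (fun z => s(γ.getVert z.2, γ.getVert (z.2 + z.1))) with hAdef
  have hmemsig : ∀ z : (_ : ℕ) × ℕ,
      z ∈ (Finset.Icc 2 (k-1)).sigma (fun d => Finset.range (γ.length + 1 - d)) →
      2 ≤ z.1 ∧ z.1 ≤ k - 1 ∧ z.2 + z.1 ≤ γ.length := by
    intro z hz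
    rw [Finset.mem_sigma] at hz
    obtain ⟨h1, h2⟩ := hz
    rw [Finset.mem_Icc] at h1
    rw [Finset.mem_range] at h2
    omega
  have hAcard : A.card = ∑ d ∈ Finset.Icc 2 (k-1), (γ.length + 1 - d) := by
    rw [hAdef, Finset.card_image_of_injOn, Finset.card_sigma]
    · apply Finset.sum_congr rfl
      intro d _
      rw [Finset.card_range]
    · intro z hz z' hz' heq
      obtain ⟨hz1, hz2, hz3⟩ := hmemsig z hz
      obtain ⟨hz1', hz2', hz3'⟩ := hmemsig z' hz'
      simp only [Sym2.eq_iff] at heq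
      rcases heq with ⟨e1, e2⟩ | ⟨e1, e2⟩
      · have i1 := hgetVert_inj _ _ (by omega) (by omega) e1
        have i2 := hgetVert_inj _ _ (by omega) (by omega) e2
        have : z.1 = z'.1 := by omega
        exact Sigma.ext this (by simp; omega)
      · have i1 := hgetVert_inj _ _ (by omega) (by omega) e1
        have i2 := hgetVert_inj _ _ (by omega) (by omega) e2
        have h1 : z.1 = z'.1 := by omega
        exact Sigma.ext h1 (by simp; omega)
  have hAprop : ∀ p ∈ A, (2 ≤ pairDist G p ∧ pairDist G p ≤ k - 1) ∧
      ∀ w ∈ p, w ∈ γ.support := by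
    intro p hp
    rw [hAdef, Finset.mem_image] at hp
    obtain ⟨z, hz, rfl⟩ := hp
    obtain ⟨h1, h2, h3⟩ := hmemsig z hz
    have hdist : G.dist (γ.getVert z.2) (γ.getVert (z.2 + z.1)) = z.1 := by
      have := WF.dist_getVert_shortest hc γ hγ (a := z.2) (b := z.2 + z.1) (by omega) h3
      omega
    constructor
    · rw [WF.pairDist_mk, hdist]; exact ⟨h1, h2⟩
    · intro w hw
      rw [Sym2.mem_iff] at hw
      rcases hw with rfl | rfl
      · exact SimpleGraph.Walk.mem_support_iff_exists_getVert.mpr ⟨z.2, rfl, by omega⟩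
      · exact SimpleGraph.Walk.mem_support_iff_exists_getVert.mpr ⟨z.2 + z.1, rfl, by omega⟩
  -- family B : pairs owned by off-γ vertices
  set Off : Finset V := Finset.univ.filter (fun x => x ∉ γ.support) with hOffdef
  have hOffmem : ∀ x ∈ Off, x ∉ γ.support := by
    intro x hx; rw [hOffdef, Finset.mem_filter] at hx; exact hx.2
  have hOffcard : Off.card = Fintype.card V - (γ.length + 1) := by
    have hsplit := Finset.card_filter_add_card_filter_not
      (s := (Finset.univ : Finset V)) (p := fun x => x ∈ γ.support)
    have hpos : (Finset.univ.filter (fun x => x ∈ γ.support)).card = γ.length + 1 := by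
      rw [← hΓcard]
      congr 1
      ext w
      simp
    rw [hOffdef]
    rw [Finset.card_univ] at hsplit
    omega
  have hch : ∀ z : {x // x ∈ Off}, ∃ S : Finset V, k - 2 ≤ S.card ∧ ∀ y ∈ S,
      2 ≤ G.dist z.1 y ∧ G.dist z.1 y ≤ k - 1 ∧
        (y ∈ γ.support ∨ G.dist u0 y + 2 ≤ G.dist u0 z.1) :=
    fun z => WF.perX hc γ hγ hE (hOffmem z.1 z.2)
  choose Sf hSf1 hSf2 using hch
  set B : Finset (Sym2 V) :=
    Off.attach.biUnion (fun z => (Sf z).image (fun y => s(z.1, y))) with hBdef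
  have himcard : ∀ z : {x // x ∈ Off}, ((Sf z).image (fun y => s(z.1, y))).card =
      (Sf z).card := by
    intro z
    apply Finset.card_image_of_injOn
    intro y hy y' hy' heq
    simp only [Sym2.eq_iff] at heq
    rcases heq with ⟨-, e2⟩ | ⟨e1, e2⟩
    · exact e2
    · exfalso
      have h1 := (hSf2 z y hy).1
      rw [e2, SimpleGraph.dist_self] at h1
      omega
  have hBdisj : ∀ z ∈ Off.attach, ∀ z' ∈ Off.attach, z ≠ z' →
      Disjoint ((Sf z).image (fun y => s(z.1, y))) ((Sf z').image (fun y => s(z'.1, y))) := by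
    intro z _ z' _ hzz
    rw [Finset.disjoint_left]
    intro p hp hp'
    rw [Finset.mem_image] at hp hp'
    obtain ⟨y, hy, rfl⟩ := hp
    obtain ⟨y', hy', heq⟩ := hp'
    have hxx : z.1 ≠ z'.1 := fun h => hzz (Subtype.ext h)
    simp only [Sym2.eq_iff] at heq
    rcases heq with ⟨e1, e2⟩ | ⟨e1, e2⟩
    · exact hxx e1.symm
    · -- z'.1 = y and y' = z.1 : mutual ownership contradiction
      have h1 := (hSf2 z y hy).2.2
      have h2 := (hSf2 z' y' hy').2.2
      rcases h1 with h1 | h1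
      · rw [← e1] at h1
        exact hOffmem z'.1 z'.2 h1
      · rcases h2 with h2 | h2
        · rw [e2] at h2
          exact hOffmem z.1 z.2 h2
        · rw [← e1] at h1
          rw [e2] at h2
          omega
  have hBcard' : (Fintype.card V - (γ.length + 1)) * (k - 2) ≤ B.card := by
    rw [hBdef, Finset.card_biUnion hBdisj]
    calc (Fintype.card V - (γ.length + 1)) * (k - 2)
        = ∑ _z ∈ Off.attach, (k - 2) := by
          rw [Finset.sum_const, Finset.card_attach, hOffcard, smul_eq_mul]
      _ ≤ ∑ z ∈ Off.attach, ((Sf z).image (fun y => s(z.1, y))).card := by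
          apply Finset.sum_le_sum
          intro z _
          rw [himcard z]
          exact hSf1 z
  have hBprop : ∀ p ∈ B, (2 ≤ pairDist G p ∧ pairDist G p ≤ k - 1) ∧
      ∃ w ∈ p, w ∉ γ.support := by
    intro p hp
    rw [hBdef, Finset.mem_biUnion] at hp
    obtain ⟨z, _, hp⟩ := hp
    rw [Finset.mem_image] at hp
    obtain ⟨y, hy, rfl⟩ := hp
    obtain ⟨h1, h2, _⟩ := hSf2 z y hy
    refine ⟨⟨?_, ?_⟩, z.1, Sym2.mem_mk_left _ _, hOffmem z.1 z.2⟩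
    · rw [WF.pairDist_mk]; exact h1
    · rw [WF.pairDist_mk]; exact h2
  have hABdisj : Disjoint A B := by
    rw [Finset.disjoint_left]
    intro p hpA hpB
    obtain ⟨w, hw1, hw2⟩ := (hBprop p hpB).2
    exact hw2 ((hAprop p hpA).2 w hw1)
  have hsub : A ∪ B ⊆ Finset.univ.filter
      (fun p : Sym2 V => 2 ≤ pairDist G p ∧ pairDist G p ≤ k-1) := by
    intro p hp
    rw [Finset.mem_filter]
    rcases Finset.mem_union.mp hp with hp | hp
    · exact ⟨Finset.mem_univ _, (hAprop p hp).1⟩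
    · exact ⟨Finset.mem_univ _, (hBprop p hp).1⟩
  calc ∑ d ∈ Finset.Icc 2 (k-1), (Fintype.card V - d)
      ≤ ∑ d ∈ Finset.Icc 2 (k-1), ((γ.length + 1 - d) + (Fintype.card V - (γ.length + 1))) := by
        apply Finset.sum_le_sum
        intro d hd
        rw [Finset.mem_Icc] at hd
        omega
    _ = (∑ d ∈ Finset.Icc 2 (k-1), (γ.length + 1 - d)) +
        (Fintype.card V - (γ.length + 1)) * (k - 2) := by
        rw [Finset.sum_add_distrib, Finset.sum_const, Nat.card_Icc, smul_eq_mul]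
        have hkk : k - 1 + 1 - 2 = k - 2 := by omega
        rw [hkk, Nat.mul_comm]
    _ ≤ A.card + B.card := Nat.add_le_add (le_of_eq hAcard.symm) hBcard'
    _ = (A ∪ B).card := (Finset.card_union_of_disjoint hABdisj).symm
    _ ≤ _ := Finset.card_le_card hsub

end Helpers

namespace WFPK

variable {n q t : ℕ}

lemma adj_iff {i j : Fin n} : (pathComplete n q t).Adj i j ↔ i.val ≠ j.val ∧
    (max i.val j.val < q ∨
     (max i.val j.val = min i.val j.val + 1 ∧ q ≤ max i.val j.val) ∨
     (max i.val j.val = q ∧ q - t ≤ min i.val j.val)) := by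
  constructor
  · rintro ⟨h1, h2⟩
    exact ⟨fun h => h1 (Fin.ext h), h2⟩
  · rintro ⟨h1, h2⟩
    exact ⟨fun h => h1 (congrArg Fin.val h), h2⟩

lemma connected (hn : 0 < n) : (pathComplete n q t).Connected := by
  have hreach : ∀ (c : ℕ) (v : Fin n), v.val = c →
      (pathComplete n q t).Reachable v ⟨0, hn⟩ := by
    intro c
    induction c with
    | zero =>
      intro v hv
      have : v = ⟨0, hn⟩ := Fin.ext hv
      rw [this]
    | succ c ih =>
      intro v hv
      have hcn : c < n := by omega
      have hadj : (pathComplete n q t).Adj v ⟨c, hcn⟩ := by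
        rw [adj_iff]
        simp only [Fin.val_mk]
        omega
      exact hadj.reachable.trans (ih ⟨c, hcn⟩ rfl)
  have : Nonempty (Fin n) := ⟨⟨0, hn⟩⟩
  exact SimpleGraph.Connected.mk
    (fun u v => (hreach u.val u rfl).trans (hreach v.val v rfl).symm)

lemma dist_one {i j : Fin n} (hi : i.val < q) (hj : j.val < q) (hne : i.val ≠ j.val) :
    (pathComplete n q t).dist i j = 1 :=
  SimpleGraph.dist_eq_one_iff_adj.mpr (adj_iff.mpr ⟨hne, by omega⟩)

lemma chain_le (hn : 0 < n) : ∀ (c : ℕ) (i j : Fin n), q ≤ i.val → i.val + c = j.val →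
    (pathComplete n q t).dist i j ≤ c := by
  intro c
  induction c with
  | zero =>
    intro i j hi hij
    have : i = j := Fin.ext (by omega)
    rw [this, SimpleGraph.dist_self]
  | succ c ih =>
    intro i j hi hij
    have hj' : i.val + c < n := by have := j.isLt; omega
    set j' : Fin n := ⟨i.val + c, hj'⟩ with hj'def
    have hadj : (pathComplete n q t).Adj j' j := by
      rw [adj_iff]
      simp only [hj'def, Fin.val_mk]
      omega
    have htr := (connected hn (q := q) (t := t)).dist_triangle (u := i) (v := j') (w := j)
    have h1 := ih i j' hi rfl
    have h2 : (pathComplete n q t).dist j' j = 1 := SimpleGraph.dist_eq_one_iff_adj.mpr hadj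
    omega

lemma dist_path (hn : 0 < n) {i j : Fin n} (hi : q ≤ i.val) (hij : i.val ≤ j.val) :
    (pathComplete n q t).dist i j = j.val - i.val := by
  have hle := chain_le (q := q) (t := t) hn (j.val - i.val) i j hi (by omega)
  have hpot0 := WF.pot_le (connected hn (q := q) (t := t)) (fun x => max x.val q)
    (by
      intro a b hadj
      rw [adj_iff] at hadj
      show max a.val q ≤ max b.val q + 1
      omega) j i
  have hpot : max j.val q ≤ max i.val q + (pathComplete n q t).dist j i := hpot0
  rw [SimpleGraph.dist_comm (u := j)] at hpot
  omega

lemma dist_near (hn : 0 < n) {i j : Fin n} (hi : q - t ≤ i.val) (hiq : i.val < q)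
    (hj : q ≤ j.val) : (pathComplete n q t).dist i j = j.val - q + 1 := by
  have hqn : q < n := lt_of_le_of_lt hj j.isLt
  set m : Fin n := ⟨q, hqn⟩ with hmdef
  have hadj : (pathComplete n q t).Adj i m := by
    rw [adj_iff]
    simp only [hmdef, Fin.val_mk]
    omega
  have h1 : (pathComplete n q t).dist i m = 1 := SimpleGraph.dist_eq_one_iff_adj.mpr hadj
  have h2 := chain_le (q := q) (t := t) hn (j.val - q) m j (le_of_eq rfl)
    (by simp only [hmdef, Fin.val_mk]; omega)
  have htr := (connected hn (q := q) (t := t)).dist_triangle (u := i) (v := m) (w := j)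
  have hpot0 := WF.pot_le (connected hn (q := q) (t := t))
    (fun x => if q ≤ x.val then x.val - q + 1 else 0)
    (by
      intro a b hadj
      rw [adj_iff] at hadj
      show (if q ≤ a.val then a.val - q + 1 else 0) ≤ (if q ≤ b.val then b.val - q + 1 else 0) + 1
      split_ifs <;> omega) j i
  have hpot : (if q ≤ j.val then j.val - q + 1 else 0) ≤
      (if q ≤ i.val then i.val - q + 1 else 0) + (pathComplete n q t).dist j i := hpot0
  rw [if_pos hj, if_neg (by omega : ¬ q ≤ i.val), SimpleGraph.dist_comm (u := j)] at hpot
  omega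

lemma dist_far (hn : 0 < n) (ht : 1 ≤ t) {i j : Fin n} (hi : i.val < q - t)
    (hj : q ≤ j.val) : (pathComplete n q t).dist i j = j.val - q + 2 := by
  have hqn : q < n := lt_of_le_of_lt hj j.isLt
  have hq1 : 1 ≤ q := by omega
  set m1 : Fin n := ⟨q - 1, by omega⟩ with hm1def
  set m : Fin n := ⟨q, hqn⟩ with hmdef
  have hadj1 : (pathComplete n q t).Adj i m1 := by
    rw [adj_iff]
    simp only [hm1def, Fin.val_mk]
    omega
  have hadj2 : (pathComplete n q t).Adj m1 m := by
    rw [adj_iff]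
    simp only [hm1def, hmdef, Fin.val_mk]
    omega
  have h1 : (pathComplete n q t).dist i m1 = 1 := SimpleGraph.dist_eq_one_iff_adj.mpr hadj1
  have h2 : (pathComplete n q t).dist m1 m = 1 := SimpleGraph.dist_eq_one_iff_adj.mpr hadj2
  have h3 := chain_le (q := q) (t := t) hn (j.val - q) m j (le_of_eq rfl)
    (by simp only [hmdef, Fin.val_mk]; omega)
  have htr1 := (connected hn (q := q) (t := t)).dist_triangle (u := i) (v := m1) (w := j)
  have htr2 := (connected hn (q := q) (t := t)).dist_triangle (u := m1) (v := m) (w := j)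
  have hpot0 := WF.pot_le (connected hn (q := q) (t := t))
    (fun x => if q ≤ x.val then x.val - q + 2 else if q - t ≤ x.val then 1 else 0)
    (by
      intro a b hadj
      rw [adj_iff] at hadj
      show (if q ≤ a.val then a.val - q + 2 else if q - t ≤ a.val then 1 else 0) ≤
        (if q ≤ b.val then b.val - q + 2 else if q - t ≤ b.val then 1 else 0) + 1
      split_ifs <;> omega) j i
  have hpot : (if q ≤ j.val then j.val - q + 2 else if q - t ≤ j.val then 1 else 0) ≤
      (if q ≤ i.val then i.val - q + 2 else if q - t ≤ i.val then 1 else 0) +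
      (pathComplete n q t).dist j i := hpot0
  rw [if_pos hj, if_neg (by omega : ¬ q ≤ i.val), if_neg (by omega : ¬ q - t ≤ i.val),
    SimpleGraph.dist_comm (u := j)] at hpot
  omega

lemma dist_le_global (hn : 0 < n) (ht : 1 ≤ t) (i j : Fin n) :
    (pathComplete n q t).dist i j ≤ n - q + 1 := by
  rcases lt_trichotomy i.val j.val with h | h | h
  · rcases Nat.lt_or_ge j.val q with hj | hj
    · rw [dist_one (by omega) hj (by omega)]; omega
    · rcases Nat.lt_or_ge i.val q with hi | hi
      · rcases Nat.lt_or_ge i.val (q - t) with hit | hit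
        · rw [dist_far hn ht hit hj]; have := j.isLt; omega
        · rw [dist_near hn hit hi hj]; have := j.isLt; omega
      · rw [dist_path hn hi (by omega)]; have := j.isLt; omega
  · have : i = j := Fin.ext h
    rw [this, SimpleGraph.dist_self]; omega
  · rw [SimpleGraph.dist_comm]
    rcases Nat.lt_or_ge i.val q with hj | hj
    · rw [dist_one (by omega) hj (by omega)]; omega
    · rcases Nat.lt_or_ge j.val q with hi | hi
      · rcases Nat.lt_or_ge j.val (q - t) with hit | hit
        · rw [dist_far hn ht hit hj]; have := i.isLt; omega
        · rw [dist_near hn hit hi hj]; have := i.isLt; omega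
      · rw [dist_path hn hi (by omega)]; have := i.isLt; omega

/-- structure of a pair at distance `d ≥ 2`. -/
lemma pair_struct (hn : 0 < n) (ht : 1 ≤ t) {d : ℕ} (hd : 2 ≤ d) {i j : Fin n}
    (hij : i.val < j.val) (hdist : (pathComplete n q t).dist i j = d) :
    (q ≤ i.val ∧ j.val = i.val + d) ∨
    (q - t ≤ i.val ∧ i.val < q ∧ j.val = q + d - 1) ∨
    (i.val < q - t ∧ j.val = q + d - 2) := by
  rcases Nat.lt_or_ge j.val q with hj | hj
  · rw [dist_one (by omega) hj (by omega)] at hdist; omega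
  · rcases Nat.lt_or_ge i.val q with hi | hi
    · rcases Nat.lt_or_ge i.val (q - t) with hit | hit
      · rw [dist_far hn ht hit hj] at hdist
        right; right; exact ⟨hit, by omega⟩
      · rw [dist_near hn hit hi hj] at hdist
        right; left; exact ⟨hit, hi, by omega⟩
    · rw [dist_path hn hi (by omega)] at hdist
      left; exact ⟨hi, by omega⟩


lemma pairDist_mk {V : Type*} (G : SimpleGraph V) (a b : V) :
    pairDist G s(a, b) = G.dist a b := rfl

lemma pd_diag {V : Type*} (G : SimpleGraph V) {p : Sym2 V} (hp : p.IsDiag) :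
    pairDist G p = 0 := by
  induction p with
  | _ a b =>
    rw [Sym2.mk_isDiag_iff] at hp
    rw [hp, pairDist_mk, SimpleGraph.dist_self]

lemma sym2_rep_lt {p : Sym2 (Fin n)} (hp : ¬ p.IsDiag) :
    ∃ i j : Fin n, i.val < j.val ∧ p = s(i, j) := by
  induction p with
  | _ a b =>
    rw [Sym2.mk_isDiag_iff] at hp
    rcases lt_trichotomy a.val b.val with h | h | h
    · exact ⟨a, b, h, rfl⟩
    · exact absurd (Fin.ext h) hp
    · exact ⟨b, a, h, Sym2.eq_swap⟩

lemma count_rep (hn : 0 < n) (ht : 1 ≤ t) {d : ℕ} (hd : 2 ≤ d) :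
    ∀ p ∈ Finset.univ.filter
      (fun p : Sym2 (Fin n) => pairDist (pathComplete n q t) p = d),
      ∃ i j : Fin n, i.val < j.val ∧ p = s(i, j) ∧
        ((q ≤ i.val ∧ j.val = i.val + d) ∨
         (q - t ≤ i.val ∧ i.val < q ∧ j.val = q + d - 1) ∨
         (i.val < q - t ∧ j.val = q + d - 2)) := by
  intro p hp
  rw [Finset.mem_filter] at hp
  have hnd : ¬ p.IsDiag := by
    intro h
    have := pd_diag (pathComplete n q t) h
    omega
  obtain ⟨i, j, hij, rfl⟩ := sym2_rep_lt hnd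
  rw [pairDist_mk] at hp
  exact ⟨i, j, hij, rfl, pair_struct hn ht hd hij hp.2⟩


/-- count of PK pairs at exact distance d, middle range -/
lemma count_mid (hn : 0 < n) (ht : 1 ≤ t) {d : ℕ} (hd : 2 ≤ d) :
    (Finset.univ.filter
      (fun p : Sym2 (Fin n) => pairDist (pathComplete n q t) p = d)).card ≤ n - d := by
  have key := count_rep (q := q) (t := t) hn ht hd
  have := Finset.card_le_card_of_injOn
    (f := fun p : Sym2 (Fin n) =>
      Sym2.lift ⟨fun i j : Fin n => min i.val j.val, fun _ _ => min_comm _ _⟩ p)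
    (s := Finset.univ.filter
      (fun p : Sym2 (Fin n) => pairDist (pathComplete n q t) p = d))
    (t := Finset.range (n - d)) ?_ ?_
  · simpa using this
  · intro p hp
    obtain ⟨i, j, hij, rfl, hcase⟩ := key p hp
    rw [Finset.mem_coe, Finset.mem_range]
    show min i.val j.val < n - d
    have hjn := j.isLt
    omega
  · intro p hp p' hp' heq
    obtain ⟨i, j, hij, rfl, hcase⟩ := key p hp
    obtain ⟨i', j', hij', rfl, hcase'⟩ := key p' hp'
    have hmin : min i.val j.val = min i'.val j'.val := heq
    rw [min_eq_left (le_of_lt hij), min_eq_left (le_of_lt hij')] at hmin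
    have hi : i = i' := Fin.ext hmin
    have hj : j = j' := Fin.ext (by omega)
    rw [hi, hj]

lemma count_top (hn : 0 < n) (ht : 1 ≤ t) (hq : q < n) :
    (Finset.univ.filter
      (fun p : Sym2 (Fin n) => pairDist (pathComplete n q t) p = n - q + 1)).card ≤ q - t := by
  have hd : 2 ≤ n - q + 1 := by omega
  have key := count_rep (q := q) (t := t) hn ht hd
  have := Finset.card_le_card_of_injOn
    (f := fun p : Sym2 (Fin n) =>
      Sym2.lift ⟨fun i j : Fin n => min i.val j.val, fun _ _ => min_comm _ _⟩ p)
    (s := Finset.univ.filter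
      (fun p : Sym2 (Fin n) => pairDist (pathComplete n q t) p = n - q + 1))
    (t := Finset.range (q - t)) ?_ ?_
  · simpa using this
  · intro p hp
    obtain ⟨i, j, hij, rfl, hcase⟩ := key p hp
    rw [Finset.mem_coe, Finset.mem_range]
    show min i.val j.val < q - t
    have hjn := j.isLt
    have hin := i.isLt
    omega
  · intro p hp p' hp' heq
    obtain ⟨i, j, hij, rfl, hcase⟩ := key p hp
    obtain ⟨i', j', hij', rfl, hcase'⟩ := key p' hp'
    have hmin : min i.val j.val = min i'.val j'.val := heq
    rw [min_eq_left (le_of_lt hij), min_eq_left (le_of_lt hij')] at hmin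
    have hjn := j.isLt
    have hjn' := j'.isLt
    have hi : i = i' := Fin.ext hmin
    have hj : j = j' := Fin.ext (by omega)
    rw [hi, hj]

lemma count_zero (hn : 0 < n) (ht : 1 ≤ t) {d : ℕ} (hd : n - q + 2 ≤ d) :
    (Finset.univ.filter
      (fun p : Sym2 (Fin n) => pairDist (pathComplete n q t) p = d)).card = 0 := by
  rw [Finset.card_eq_zero, Finset.filter_eq_empty_iff]
  intro p _
  induction p with
  | _ a b =>
    rw [pairDist_mk]
    have := dist_le_global (q := q) hn ht a b
    omega

lemma count_zero_qn (hq : n ≤ q) {d : ℕ} (hd : 2 ≤ d) :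
    (Finset.univ.filter
      (fun p : Sym2 (Fin n) => pairDist (pathComplete n q t) p = d)).card = 0 := by
  rw [Finset.card_eq_zero, Finset.filter_eq_empty_iff]
  intro p _
  induction p with
  | _ a b =>
    rw [pairDist_mk]
    by_cases hab : a.val = b.val
    · have : a = b := Fin.ext hab
      rw [this, SimpleGraph.dist_self]
      omega
    · rw [dist_one (lt_of_lt_of_le a.isLt hq) (lt_of_lt_of_le b.isLt hq) hab]
      omega

end WFPK

namespace WFG
variable {W : Type*} [Fintype W] [DecidableEq W]

lemma pairDist_mk (G : SimpleGraph W) (a b : W) : pairDist G s(a, b) = G.dist a b := rfl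

lemma pd_diag (G : SimpleGraph W) {p : Sym2 W} (hp : p.IsDiag) : pairDist G p = 0 := by
  induction p with
  | _ a b =>
    rw [Sym2.mk_isDiag_iff] at hp
    rw [hp, pairDist_mk, SimpleGraph.dist_self]

lemma pd_pos (G : SimpleGraph W) (hc : G.Connected) {p : Sym2 W} (hp : ¬ p.IsDiag) :
    1 ≤ pairDist G p := by
  induction p with
  | _ a b =>
    rw [Sym2.mk_isDiag_iff] at hp
    rw [pairDist_mk]
    exact hc.pos_dist_of_ne hp

lemma pd_le (G : SimpleGraph W) (hc : G.Connected) (p : Sym2 W) :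
    pairDist G p ≤ Fintype.card W - 1 := by
  induction p with
  | _ a b =>
    rw [pairDist_mk]
    obtain ⟨w, hw1, hw2⟩ := hc.exists_path_of_dist a b
    have := hw1.length_lt
    omega

lemma nondiag_card :
    (Finset.univ.filter (fun p : Sym2 W => ¬ p.IsDiag)).card = (Fintype.card W).choose 2 := by
  rw [← Sym2.card_subtype_not_diag]
  exact (Fintype.card_subtype _).symm

lemma edge_card (H : SimpleGraph W) :
    (Finset.univ.filter (fun p : Sym2 W => pairDist H p = 1)).card = H.edgeSet.ncard := by
  have hset : H.edgeSet = ↑(Finset.univ.filter (fun p : Sym2 W => pairDist H p = 1)) := by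
    ext p
    induction p with
    | _ a b =>
      simp only [Finset.coe_filter, Set.mem_setOf_eq, Finset.mem_univ, true_and,
        SimpleGraph.mem_edgeSet]
      rw [pairDist_mk]
      exact ⟨fun h => SimpleGraph.dist_eq_one_iff_adj.mpr h,
        fun h => SimpleGraph.dist_eq_one_iff_adj.mp h⟩
  rw [hset, Set.ncard_coe_finset]

lemma partition (H : SimpleGraph W) (hc : H.Connected) {j : ℕ} (hj : 2 ≤ j) :
    (Finset.univ.filter (fun p : Sym2 W => ¬ p.IsDiag)).card =
      (Finset.univ.filter (fun p : Sym2 W => pairDist H p = 1)).card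
      + (Finset.univ.filter
          (fun p : Sym2 W => 2 ≤ pairDist H p ∧ pairDist H p ≤ j-1)).card
      + (Finset.univ.filter (fun p : Sym2 W => ¬ p.IsDiag ∧ j ≤ pairDist H p)).card := by
  have hnd : ∀ p : Sym2 W, 1 ≤ pairDist H p → ¬ p.IsDiag := by
    intro p h hd
    rw [pd_diag H hd] at h
    omega
  have hsplit : Finset.univ.filter (fun p : Sym2 W => ¬ p.IsDiag) =
      (Finset.univ.filter (fun p : Sym2 W => pairDist H p = 1) ∪
       Finset.univ.filter (fun p : Sym2 W => 2 ≤ pairDist H p ∧ pairDist H p ≤ j-1)) ∪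
      Finset.univ.filter (fun p : Sym2 W => ¬ p.IsDiag ∧ j ≤ pairDist H p) := by
    ext p
    simp only [Finset.mem_filter, Finset.mem_union, Finset.mem_univ, true_and]
    constructor
    · intro hp
      have h1 := pd_pos H hc hp
      rcases Nat.lt_or_ge (pairDist H p) j with h | h
      · rcases Nat.eq_or_lt_of_le h1 with h2 | h2
        · exact Or.inl (Or.inl h2.symm)
        · exact Or.inl (Or.inr ⟨by omega, by omega⟩)
      · exact Or.inr ⟨hp, h⟩
    · rintro ((h | h) | h)
      · exact hnd p (by omega)
      · exact hnd p (by omega)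
      · exact h.1
  rw [hsplit, Finset.card_union_of_disjoint, Finset.card_union_of_disjoint]
  · rw [Finset.disjoint_left]
    intro p hp1 hp2
    rw [Finset.mem_filter] at hp1 hp2
    omega
  · rw [Finset.disjoint_left]
    intro p hp1 hp2
    rw [Finset.mem_union, Finset.mem_filter, Finset.mem_filter] at hp1
    rw [Finset.mem_filter] at hp2
    rcases hp1 with h | h <;> omega

lemma tele (f : ℕ → ℝ) : ∀ d, 1 ≤ d →
    ∑ j ∈ Finset.Icc 2 d, (f j - f (j-1)) = f d - f 1 := by
  intro d
  induction d with
  | zero => intro h; omega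
  | succ d ih =>
    intro _
    by_cases hd : d = 0
    · subst hd
      norm_num
    · rw [Finset.sum_Icc_succ_top (by omega), ih (by omega)]
      have : d + 1 - 1 = d := by omega
      rw [this]
      ring

lemma abel (H : SimpleGraph W) (hc : H.Connected) (hn2 : 2 ≤ Fintype.card W) (f : ℕ → ℝ) :
    wienerF H f = ((Finset.univ.filter (fun p : Sym2 W => ¬ p.IsDiag)).card : ℝ) * f 1
      + ∑ j ∈ Finset.Icc 2 (Fintype.card W - 1), (f j - f (j-1)) *
          ((Finset.univ.filter
            (fun p : Sym2 W => ¬ p.IsDiag ∧ j ≤ pairDist H p)).card : ℝ) := by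
  have hstep1 : wienerF H f = ∑ p ∈ Finset.univ.filter (fun p : Sym2 W => ¬ p.IsDiag),
      (f 1 + ∑ j ∈ Finset.Icc 2 (Fintype.card W - 1),
        (if j ≤ pairDist H p then f j - f (j-1) else 0)) := by
    rw [wienerF]
    apply Finset.sum_congr rfl
    intro p hp
    rw [Finset.mem_filter] at hp
    have h1 := pd_pos H hc hp.2
    have h2 := pd_le H hc p
    have hfilt : (Finset.Icc 2 (Fintype.card W - 1)).filter (· ≤ pairDist H p) =
        Finset.Icc 2 (pairDist H p) := by
      ext j
      simp only [Finset.mem_filter, Finset.mem_Icc]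
      omega
    rw [← Finset.sum_filter, hfilt, tele f _ h1]
    ring
  rw [hstep1, Finset.sum_add_distrib, Finset.sum_const, Finset.sum_comm]
  congr 1
  · rw [nsmul_eq_mul]
  · apply Finset.sum_congr rfl
    intro j _
    rw [← Finset.sum_filter, Finset.sum_const, Finset.filter_filter, nsmul_eq_mul]
    rw [mul_comm]
end WFG

/-- decomposition of a distance band by exact distance -/
lemma WFG.band_card {W : Type*} [Fintype W] [DecidableEq W] (H : SimpleGraph W) (hi : ℕ) :
    (Finset.univ.filter
      (fun p : Sym2 W => 2 ≤ pairDist H p ∧ pairDist H p ≤ hi)).card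
    = ∑ d ∈ Finset.Icc 2 hi,
        (Finset.univ.filter (fun p : Sym2 W => pairDist H p = d)).card := by
  rw [Finset.card_eq_sum_card_fiberwise (f := pairDist H) (t := Finset.Icc 2 hi)
    (by intro p hp; rw [Finset.mem_coe, Finset.mem_filter] at hp; rw [Finset.mem_coe, Finset.mem_Icc]; exact hp.2)]
  apply Finset.sum_congr rfl
  intro d hd
  rw [Finset.mem_Icc] at hd
  congr 1
  ext p
  simp only [Finset.mem_filter, Finset.mem_univ, true_and]
  constructor
  · rintro ⟨-, h⟩; exact h
  · intro h; exact ⟨by omega, h⟩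

/-- Among connected graphs with `n` vertices and `m` edges, the path-complete graph
`PK_{n,m}` maximises every generalised Wiener index `W_f` with `f` nondecreasing. -/
theorem wienerF_le_wienerF_pathComplete {V : Type*} [Fintype V] [DecidableEq V]
    (G : SimpleGraph V) (hG : G.Connected) (n m : ℕ) (hn : 2 ≤ n)
    (hm₁ : n - 1 ≤ m) (hm₂ : m ≤ n * (n - 1) / 2)
    (hcard : Fintype.card V = n) (hsize : G.edgeSet.ncard = m)
    (f : ℕ → ℝ) (hf : Monotone f)
    (q t : ℕ) (ht : 1 ≤ t) (htq : t ≤ q) (hq : q ≤ n)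
    (hPK : (pathComplete n q t).edgeSet.ncard = m) :
    wienerF G f ≤ wienerF (pathComplete n q t) f := by
  classical
  have hn0 : 0 < n := by omega
  have hKconn : (pathComplete n q t).Connected := WFPK.connected hn0
  have hcardF : Fintype.card (Fin n) = n := Fintype.card_fin n
  -- the key per-level comparison
  have hsigma : ∀ j, 2 ≤ j →
      (Finset.univ.filter (fun p : Sym2 V => ¬ p.IsDiag ∧ j ≤ pairDist G p)).card ≤
      (Finset.univ.filter (fun p : Sym2 (Fin n) =>
        ¬ p.IsDiag ∧ j ≤ pairDist (pathComplete n q t) p)).card := by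
    intro j hj
    have hGid := WFG.partition G hG hj
    have hKid := WFG.partition (pathComplete n q t) hKconn hj
    have hGedge : (Finset.univ.filter (fun p : Sym2 V => pairDist G p = 1)).card = m := by
      rw [WFG.edge_card, hsize]
    have hKedge : (Finset.univ.filter (fun p : Sym2 (Fin n) =>
        pairDist (pathComplete n q t) p = 1)).card = m := by
      rw [WFG.edge_card, hPK]
    have hGnd : (Finset.univ.filter (fun p : Sym2 V => ¬ p.IsDiag)).card = n.choose 2 := by
      rw [WFG.nondiag_card, hcard]
    have hKnd : (Finset.univ.filter (fun p : Sym2 (Fin n) => ¬ p.IsDiag)).card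
        = n.choose 2 := by
      rw [WFG.nondiag_card, hcardF]
    -- suffices: band comparison
    have hband : (Finset.univ.filter (fun p : Sym2 (Fin n) =>
          2 ≤ pairDist (pathComplete n q t) p ∧ pairDist (pathComplete n q t) p ≤ j-1)).card
        ≤ (Finset.univ.filter
          (fun p : Sym2 V => 2 ≤ pairDist G p ∧ pairDist G p ≤ j-1)).card := by
      rcases Nat.lt_or_ge q n with hqn | hqn
      swap
      · -- q = n : complete graph, K has no pairs at distance ≥ 2
        have h0 : (Finset.univ.filter (fun p : Sym2 (Fin n) =>
            2 ≤ pairDist (pathComplete n q t) p ∧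
            pairDist (pathComplete n q t) p ≤ j-1)).card = 0 := by
          rw [WFG.band_card]
          apply Finset.sum_eq_zero
          intro d hd
          rw [Finset.mem_Icc] at hd
          exact WFPK.count_zero_qn hqn hd.1
        omega
      · -- q < n
        set k := min j (n - q + 2) with hkdef
        have hk2 : 2 ≤ k := by omega
        have hkj : k ≤ j := min_le_left _ _
        have hKb : (Finset.univ.filter (fun p : Sym2 (Fin n) =>
            2 ≤ pairDist (pathComplete n q t) p ∧
            pairDist (pathComplete n q t) p ≤ j-1)).card
            ≤ ∑ d ∈ Finset.Icc 2 (k-1), (n - d) := by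
          rw [WFG.band_card]
          have hsplit : Finset.Icc 2 (j-1) = Finset.Icc 2 (k-1) ∪ Finset.Icc k (j-1) := by
            ext d
            simp only [Finset.mem_union, Finset.mem_Icc]
            omega
          rw [hsplit, Finset.sum_union (by
            rw [Finset.disjoint_left]
            intro d hd1 hd2
            rw [Finset.mem_Icc] at hd1 hd2
            omega)]
          have hpart1 : ∑ d ∈ Finset.Icc 2 (k-1),
              (Finset.univ.filter (fun p : Sym2 (Fin n) =>
                pairDist (pathComplete n q t) p = d)).card
              ≤ ∑ d ∈ Finset.Icc 2 (k-1), (n - d) := by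
            apply Finset.sum_le_sum
            intro d hd
            rw [Finset.mem_Icc] at hd
            exact WFPK.count_mid hn0 ht hd.1
          have hpart2 : ∑ d ∈ Finset.Icc k (j-1),
              (Finset.univ.filter (fun p : Sym2 (Fin n) =>
                pairDist (pathComplete n q t) p = d)).card = 0 := by
            apply Finset.sum_eq_zero
            intro d hd
            rw [Finset.mem_Icc] at hd
            have hdk : n - q + 2 ≤ d := by
              have : k < j := by omega
              have : k = n - q + 2 := by omega
              omega
            exact WFPK.count_zero hn0 ht hdk
          omega
        by_cases hbig : ∃ u v : V, k ≤ G.dist u v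
        · obtain ⟨u0, v0, hduv⟩ := hbig
          have hcore := WF.core hG hk2 hduv
          rw [hcard] at hcore
          have hmono : (Finset.univ.filter
              (fun p : Sym2 V => 2 ≤ pairDist G p ∧ pairDist G p ≤ k-1)).card
              ≤ (Finset.univ.filter
              (fun p : Sym2 V => 2 ≤ pairDist G p ∧ pairDist G p ≤ j-1)).card := by
            apply Finset.card_le_card
            intro p hp
            rw [Finset.mem_filter] at hp ⊢
            exact ⟨hp.1, hp.2.1, by omega⟩
          omega
        · -- all G-distances < k ≤ j : σ_G(j) = 0
          push_neg at hbig
          have hσG0 : (Finset.univ.filter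
              (fun p : Sym2 V => ¬ p.IsDiag ∧ j ≤ pairDist G p)).card = 0 := by
            rw [Finset.card_eq_zero, Finset.filter_eq_empty_iff]
            intro p _
            rw [not_and]
            intro hnd hge
            induction p with
            | _ a b =>
              have h1 := hbig a b
              have h2 : j ≤ G.dist a b := hge
              omega
          omega
    omega
  -- Abel summation and comparison
  rw [WFG.abel G hG (by omega), WFG.abel (pathComplete n q t) hKconn (by omega)]
  rw [hcard, hcardF]
  have hCeq : (Finset.univ.filter (fun p : Sym2 V => ¬ p.IsDiag)).card
      = (Finset.univ.filter (fun p : Sym2 (Fin n) => ¬ p.IsDiag)).card := by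
    rw [WFG.nondiag_card, WFG.nondiag_card, hcard, hcardF]
  rw [hCeq]
  apply (add_le_add_iff_left _).mpr
  apply Finset.sum_le_sum
  intro j hj
  rw [Finset.mem_Icc] at hj
  apply mul_le_mul_of_nonneg_left
  · exact_mod_cast hsigma j hj.1
  · have := hf (show j - 1 ≤ j by omega)
    linarith
end

section
/- Let n, m be integers with n ≥ 2 and n−1 ≤ m ≤ C(n,2), and let G be a finite connected simple graph with n vertices and m edges. Then for every nonincreasing function f : ℕ → ℝ, W_f(G) ≥ W_f(PK_{n,m}). -/
open Finset

namespace WienerAux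

open SimpleGraph

/-- `∑_{s=2}^{j} (n - s)`. -/
def gsum (n j : ℕ) : ℕ := ∑ s ∈ Finset.Icc 2 j, (n - s)

section Generic

variable {V : Type*} {G : SimpleGraph V}

lemma pairDist_mk (G : SimpleGraph V) (x y : V) : pairDist G s(x, y) = G.dist x y := rfl

lemma adj_dist_le_one {x y : V} (h : G.Adj x y) : G.dist x y ≤ 1 := by
  simpa using G.dist_le (SimpleGraph.Walk.cons h SimpleGraph.Walk.nil)

/-- From a vertex at distance `r+1` from `v` one can step to distance `r`. -/
lemma exists_adj_dist_pred (hconn : G.Connected) {y v : V} {r : ℕ}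
    (h : G.dist y v = r + 1) : ∃ y', G.Adj y y' ∧ G.dist y' v = r := by
  obtain ⟨p, hp⟩ := (hconn y v).exists_walk_length_eq_dist
  cases p with
  | nil => simp [SimpleGraph.dist_self] at h
  | cons ha q =>
      rename_i c
      refine ⟨c, ha, ?_⟩
      have h1 : G.dist c v ≤ r := by
        have := G.dist_le q
        simp [SimpleGraph.Walk.length_cons, h] at hp
        omega
      have h2 : G.dist y v ≤ G.dist y c + G.dist c v := hconn.dist_triangle
      have h3 : G.dist y c ≤ 1 := adj_dist_le_one ha
      omega

/-- Vertices at every exact intermediate distance exist along geodesics. -/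
lemma exists_dist_eq (hconn : G.Connected) {w z : V} {s : ℕ}
    (hs : s ≤ G.dist w z) : ∃ y, G.dist w y = s ∧ G.dist w y + G.dist y z = G.dist w z := by
  induction s with
  | zero => exact ⟨w, SimpleGraph.dist_self, by simp [SimpleGraph.dist_self]⟩
  | succ s ih =>
      obtain ⟨y, hy1, hy2⟩ := ih (by omega)
      have hyz : G.dist y z = (G.dist w z - s - 1) + 1 := by omega
      obtain ⟨y', ha, hy'⟩ := exists_adj_dist_pred hconn hyz
      refine ⟨y', ?_, ?_⟩
      · have h1 : G.dist w y' ≤ G.dist w y + G.dist y y' := hconn.dist_triangle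
        have h2 : G.dist y y' ≤ 1 := adj_dist_le_one ha
        have h3 : G.dist w z ≤ G.dist w y' + G.dist y' z := hconn.dist_triangle
        omega
      · have h1 : G.dist w y' ≤ G.dist w y + G.dist y y' := hconn.dist_triangle
        have h2 : G.dist y y' ≤ 1 := adj_dist_le_one ha
        have h3 : G.dist w z ≤ G.dist w y' + G.dist y' z := hconn.dist_triangle
        omega

lemma two_le_dist_iff (hconn : G.Connected) {x y : V} :
    2 ≤ G.dist x y ↔ x ≠ y ∧ ¬ G.Adj x y := by
  constructor
  · intro h
    refine ⟨?_, ?_⟩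
    · rintro rfl; simp [SimpleGraph.dist_self] at h
    · intro hadj
      have := SimpleGraph.dist_eq_one_iff_adj.mpr hadj
      omega
  · rintro ⟨hne, hadj⟩
    have h0 : G.dist x y ≠ 0 := by
      rw [ne_eq, hconn.dist_eq_zero_iff]; exact hne
    have h1 : G.dist x y ≠ 1 := fun h => hadj (SimpleGraph.dist_eq_one_iff_adj.mp h)
    omega

lemma dist_lt_card [Fintype V] [DecidableEq V] (hconn : G.Connected) (x y : V) :
    G.dist x y < Fintype.card V := by
  obtain ⟨p⟩ := hconn x y
  calc G.dist x y ≤ p.bypass.length := G.dist_le _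
    _ < Fintype.card V := p.bypass_isPath.length_lt

end Generic

end WienerAux


namespace WienerAux

open SimpleGraph

section Induce

variable {V : Type*} {G : SimpleGraph V}

/-- Distances do not decrease upon passing to induced subgraphs (on reachable pairs). -/
lemma dist_le_induce_dist {s : Set V} {x y : s}
    (hr : (G.induce s).Reachable x y) :
    G.dist x.1 y.1 ≤ (G.induce s).dist x y := by
  obtain ⟨p, hp⟩ := hr.exists_walk_length_eq_dist
  calc G.dist x.1 y.1 ≤ (p.map (SimpleGraph.Embedding.induce s).toHom).length := G.dist_le _
    _ = p.length := SimpleGraph.Walk.length_map _ p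
    _ = _ := hp

/-- A walk whose support lies in `s` yields reachability in the induced graph. -/
lemma reachable_induce_of_walk {s : Set V} :
    ∀ {a b : V} (p : G.Walk a b) (_ : ∀ v ∈ p.support, v ∈ s)
      (ha : a ∈ s) (hb : b ∈ s), (G.induce s).Reachable ⟨a, ha⟩ ⟨b, hb⟩ := by
  intro a b p
  induction p with
  | nil => intro _ ha hb; rfl
  | cons h p ih =>
      rename_i u c w
      intro hsup ha hb
      have hc : c ∈ s := hsup c (by simp [SimpleGraph.Walk.support_cons])
      have h1 : (G.induce s).Adj ⟨u, ha⟩ ⟨c, hc⟩ := h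
      exact h1.reachable.trans (ih (fun v hv => hsup v (by simp [SimpleGraph.Walk.support_cons, hv])) hc hb)

/-- A farthest vertex from `r` is not a cut vertex. -/
lemma connected_induce_compl [DecidableEq V] (hconn : G.Connected) (r w : V)
    (hw : ∀ x, G.dist r x ≤ G.dist r w) (hrw : w ≠ r) :
    (G.induce {x : V | x ≠ w}).Connected := by
  have key : ∀ (x : V) (hx : x ≠ w), (G.induce {x : V | x ≠ w}).Reachable ⟨r, hrw.symm⟩ ⟨x, hx⟩ := by
    intro x hx
    obtain ⟨p, hp⟩ := (hconn r x).exists_walk_length_eq_dist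
    have hsup : ∀ v ∈ p.support, v ∈ {x : V | x ≠ w} := by
      intro v hv
      simp only [Set.mem_setOf_eq]
      intro hvw
      subst hvw
      -- v (= w) is on a geodesic from r to x, contradiction with maximality
      have hsplit := p.take_spec hv
      have hlen : (p.takeUntil v hv).length + (p.dropUntil v hv).length = p.length := by
        rw [← SimpleGraph.Walk.length_append, hsplit]
      have h1 : G.dist r v ≤ (p.takeUntil v hv).length := G.dist_le _
      have h2 : G.dist v x ≤ (p.dropUntil v hv).length := G.dist_le _
      have h3 : 1 ≤ G.dist v x := hconn.pos_dist_of_ne (Ne.symm hx)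
      have h4 := hw x
      omega
    exact reachable_induce_of_walk p hsup hrw.symm hx
  rw [SimpleGraph.connected_iff]
  refine ⟨fun x y => ?_, ⟨⟨r, hrw.symm⟩⟩⟩
  exact ((key x.1 x.2).symm.trans (key y.1 y.2))

end Induce

end WienerAux


namespace WienerAux

open SimpleGraph

open scoped Classical in
/-- Number of unordered pairs at distance in `[2, j]`. -/
noncomputable def midCount {V : Type*} [Fintype V] (H : SimpleGraph V) (j : ℕ) : ℕ :=
  (Finset.univ.filter fun p : Sym2 V => 2 ≤ pairDist H p ∧ pairDist H p ≤ j).card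

section Count

variable {V : Type*} [Fintype V] [DecidableEq V] {H : SimpleGraph V}

lemma gsum_step {n j : ℕ} : gsum n j ≤ gsum (n - 1) j + (j - 1) := by
  classical
  unfold gsum
  calc ∑ s ∈ Finset.Icc 2 j, (n - s) ≤ ∑ s ∈ Finset.Icc 2 j, ((n - 1 - s) + 1) :=
        Finset.sum_le_sum (fun s _ => by omega)
    _ = (∑ s ∈ Finset.Icc 2 j, (n - 1 - s)) + (∑ _s ∈ Finset.Icc 2 j, 1) := by
        rw [Finset.sum_add_distrib]
    _ ≤ gsum (n - 1) j + (j - 1) := by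
        simp [gsum, Nat.card_Icc]

/-- Deleting a vertex of eccentricity `> j`. -/
lemma midCount_delete (hconn : H.Connected) (v : V)
    (hconn' : (H.induce {x : V | x ≠ v}).Connected) {j : ℕ} (hj : 1 ≤ j)
    (hv : ∃ y, j + 1 ≤ H.dist v y) :
    midCount (H.induce {x : V | x ≠ v}) j + (j - 1) ≤ midCount H j := by
  classical
  obtain ⟨y₀, hy₀⟩ := hv
  set s : Set V := {x : V | x ≠ v} with hs
  set H' := H.induce s with hH'
  -- partners of v at each exact distance
  have hpart : ∀ k : ℕ, ∃ y, (k ∈ Finset.Icc 2 j → H.dist v y = k) := by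
    intro k
    by_cases hk : k ∈ Finset.Icc 2 j
    · have hk' : k ≤ H.dist v y₀ := by
        simp only [Finset.mem_Icc] at hk; omega
      obtain ⟨y, hy, -⟩ := exists_dist_eq hconn hk'
      exact ⟨y, fun _ => hy⟩
    · exact ⟨v, fun h => absurd h hk⟩
  choose Y hY using hpart
  set S1 : Finset (Sym2 V) :=
    (Finset.univ.filter fun p : Sym2 ↥s => 2 ≤ pairDist H' p ∧ pairDist H' p ≤ j).image
      (Sym2.map Subtype.val) with hS1
  set S2 : Finset (Sym2 V) := (Finset.Icc 2 j).image (fun k => s(v, Y k)) with hS2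
  have hS1card : S1.card = midCount H' j := by
    rw [hS1, Finset.card_image_of_injective _ (Sym2.map.injective Subtype.val_injective)]
    rw [midCount]
  have hS2card : S2.card = j - 1 := by
    have hinj : Set.InjOn (fun k => s(v, Y k)) ↑(Finset.Icc 2 j) := by
      intro k hk k' hk' he
      rw [Finset.mem_coe] at hk hk'
      have hk2 := hY k hk
      have hk2' := hY k' hk'
      simp only [Finset.mem_Icc] at hk hk'
      simp only [Sym2.eq_iff] at he
      rcases he with ⟨-, h2⟩ | ⟨h1, h2⟩
      · rw [← hk2, ← hk2', h2]
      · exfalso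
        rw [← h1] at hk2'
        rw [SimpleGraph.dist_self] at hk2'
        omega
    rw [hS2, Finset.card_image_of_injOn hinj, Nat.card_Icc]
    omega
  have hvnotinS1 : ∀ p ∈ S1, v ∉ p := by
    intro p hp
    rw [hS1, Finset.mem_image] at hp
    obtain ⟨p', -, rfl⟩ := hp
    induction p' with
    | _ x y =>
      simp only [Sym2.map_pair_eq, Sym2.mem_iff]
      push_neg
      exact ⟨fun h => x.2 h.symm, fun h => y.2 h.symm⟩
  have hvinS2 : ∀ p ∈ S2, v ∈ p := by
    intro p hp
    rw [hS2, Finset.mem_image] at hp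
    obtain ⟨k, -, rfl⟩ := hp
    simp
  have hdisj : Disjoint S1 S2 := by
    rw [Finset.disjoint_left]
    intro p h1 h2
    exact hvnotinS1 p h1 (hvinS2 p h2)
  have hsub : S1 ∪ S2 ⊆ Finset.univ.filter fun p : Sym2 V => 2 ≤ pairDist H p ∧ pairDist H p ≤ j := by
    intro p hp
    rcases Finset.mem_union.mp hp with hp | hp
    · rw [hS1, Finset.mem_image] at hp
      obtain ⟨p', hp', rfl⟩ := hp
      induction p' with
      | _ x y =>
        simp only [Finset.mem_filter] at hp'
        obtain ⟨-, h2, h3⟩ := hp'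
        rw [pairDist_mk] at h2 h3
        have hxy := (two_le_dist_iff hconn').mp h2
        have h2' : 2 ≤ H.dist x.1 y.1 := by
          apply (two_le_dist_iff hconn).mpr
          refine ⟨fun h => hxy.1 (Subtype.ext h), fun h => hxy.2 h⟩
        have h3' : H.dist x.1 y.1 ≤ j :=
          le_trans (dist_le_induce_dist (hconn' x y)) h3
        simp only [Finset.mem_filter, Finset.mem_univ, true_and]
        rw [Sym2.map_pair_eq, pairDist_mk]
        exact ⟨h2', h3'⟩
    · rw [hS2, Finset.mem_image] at hp
      obtain ⟨k, hk, rfl⟩ := hp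
      have hd := hY k hk
      simp only [Finset.mem_Icc] at hk
      simp only [Finset.mem_filter, Finset.mem_univ, true_and, pairDist_mk, hd]
      omega
  calc midCount H' j + (j - 1) = S1.card + S2.card := by rw [hS1card, hS2card]
    _ = (S1 ∪ S2).card := (Finset.card_union_of_disjoint hdisj).symm
    _ ≤ _ := Finset.card_le_card hsub
    _ = midCount H j := by rw [midCount]

end Count

end WienerAux


namespace WienerAux

open SimpleGraph

section FinalCase

variable {V : Type*} [Fintype V] [DecidableEq V] {H : SimpleGraph V}

lemma gsum_arith {n j : ℕ} (hj : 1 ≤ j) :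
    gsum n j + 1 ≤ (∑ k ∈ Finset.Icc 2 (j + 1), (j + 2 - k)) + (n - (j + 2)) * (j - 1) := by
  classical
  have hins : Finset.Icc 2 (j + 1) = insert (j + 1) (Finset.Icc 2 j) := by
    ext k
    simp only [Finset.mem_Icc, Finset.mem_insert]
    omega
  have hnot : (j + 1) ∉ Finset.Icc 2 j := by simp
  rw [hins, Finset.sum_insert hnot]
  have h1 : (n - (j + 2)) * (j - 1) = ∑ _k ∈ Finset.Icc 2 j, (n - (j + 2)) := by
    rw [Finset.sum_const, Nat.card_Icc, smul_eq_mul]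
    have h12 : j + 1 - 2 = j - 1 := by omega
    rw [h12, Nat.mul_comm]
  have h2 : gsum n j ≤ ∑ k ∈ Finset.Icc 2 j, ((j + 2 - k) + (n - (j + 2))) := by
    unfold gsum
    refine Finset.sum_le_sum (fun k hk => ?_)
    simp only [Finset.mem_Icc] at hk
    omega
  rw [Finset.sum_add_distrib] at h2
  omega

/-- Final case of the main counting lemma: when there is a unique far pair. -/
lemma midCount_of_unique_far {n : ℕ} (hconn : H.Connected) (hcard : Fintype.card V = n)
    {j : ℕ} (hj : 1 ≤ j) {w z : V} (hwz : j + 1 ≤ H.dist w z)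
    (huniq : ∀ x y : V, j + 1 ≤ H.dist x y → s(x, y) = s(w, z)) :
    gsum n j ≤ midCount H j := by
  classical
  -- geodesic vertices
  have hpart : ∀ i : ℕ, ∃ y, (i ≤ j + 1 → H.dist w y = i) := by
    intro i
    by_cases hi : i ≤ j + 1
    · obtain ⟨y, hy, -⟩ := exists_dist_eq hconn (le_trans hi hwz)
      exact ⟨y, fun _ => hy⟩
    · exact ⟨w, fun h => absurd h hi⟩
  choose u hu using hpart
  have usep : ∀ i k : ℕ, i ≤ j + 1 → k ≤ j + 1 → i ≤ k → k - i ≤ H.dist (u i) (u k) := by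
    intro i k hi hk hik
    have h1 := hu i hi
    have h2 := hu k hk
    have h3 : H.dist w (u k) ≤ H.dist w (u i) + H.dist (u i) (u k) := hconn.dist_triangle
    omega
  have uinj : ∀ i k : ℕ, i ≤ j + 1 → k ≤ j + 1 → u i = u k → i = k := by
    intro i k hi hk he
    have h1 := hu i hi
    have h2 := hu k hk
    rw [he] at h1
    omega
  set NE : Finset (Sym2 V) := Finset.univ.filter (fun p : Sym2 V => 2 ≤ pairDist H p) with hNE
  -- 1. NE.card = midCount H j + 1
  have hFAR : Finset.univ.filter (fun p : Sym2 V => j + 1 ≤ pairDist H p) = {s(w, z)} := by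
    ext p
    induction p with
    | _ x y =>
      simp only [Finset.mem_filter, Finset.mem_univ, true_and, Finset.mem_singleton, pairDist_mk]
      constructor
      · intro h; exact huniq x y h
      · intro h
        rw [Sym2.eq_iff] at h
        rcases h with ⟨rfl, rfl⟩ | ⟨rfl, rfl⟩
        · exact hwz
        · rw [SimpleGraph.dist_comm]; exact hwz
  have hNEcard : NE.card = midCount H j + 1 := by
    have hsplit : NE = (Finset.univ.filter fun p : Sym2 V => 2 ≤ pairDist H p ∧ pairDist H p ≤ j)
        ∪ (Finset.univ.filter fun p : Sym2 V => j + 1 ≤ pairDist H p) := by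
      rw [hNE, ← Finset.filter_or]
      apply Finset.filter_congr
      intro p _
      constructor
      · intro h; omega
      · intro h; omega
    have hdisj : Disjoint (Finset.univ.filter fun p : Sym2 V => 2 ≤ pairDist H p ∧ pairDist H p ≤ j)
        (Finset.univ.filter fun p : Sym2 V => j + 1 ≤ pairDist H p) := by
      rw [Finset.disjoint_left]
      intro p h1 h2
      simp only [Finset.mem_filter] at h1 h2
      omega
    rw [hsplit, Finset.card_union_of_disjoint hdisj, hFAR, midCount]
    simp
  -- 2. the two injections
  set geoF : Finset V := (Finset.range (j + 2)).image u with hgeoF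
  set offGeo : Finset V := Finset.univ \ geoF with hoffGeo
  set SA : Finset (Sym2 V) :=
    (((Finset.Icc 2 (j + 1)).sigma fun k => Finset.range (j + 2 - k)).image
      (fun ik => s(u ik.2, u (ik.2 + ik.1)))) with hSA
  set SB : Finset (Sym2 V) :=
    offGeo.biUnion (fun x =>
      (((Finset.range (j + 2)).filter fun i => 2 ≤ H.dist x (u i)).image
        (fun i => s(x, u i)))) with hSB
  have hSAcard : SA.card = ∑ k ∈ Finset.Icc 2 (j + 1), (j + 2 - k) := by
    rw [hSA, Finset.card_image_of_injOn, Finset.card_sigma]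
    · simp
    · rintro ⟨k, a⟩ hka ⟨k', a'⟩ hka' he
      simp only [Finset.mem_coe, Finset.mem_sigma, Finset.mem_Icc, Finset.mem_range] at hka hka'
      simp only [Sym2.eq_iff] at he
      obtain ⟨⟨hk2, hkj⟩, ha⟩ := hka
      obtain ⟨⟨hk2', hkj'⟩, ha'⟩ := hka'
      rcases he with ⟨h1, h2⟩ | ⟨h1, h2⟩
      · have e1 : a = a' := uinj _ _ (by omega) (by omega) h1
        have e2 : a + k = a' + k' := uinj _ _ (by omega) (by omega) h2
        simp only [Sigma.mk.inj_iff]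
        constructor
        · omega
        · rw [e1]
      · have e1 : a = a' + k' := uinj _ _ (by omega) (by omega) h1
        have e2 : a + k = a' := uinj _ _ (by omega) (by omega) h2
        omega
  have hSBcard : offGeo.card * (j - 1) ≤ SB.card := by
    rw [hSB, Finset.card_biUnion]
    · have hbound : ∀ x ∈ offGeo, (j - 1) ≤
          (((Finset.range (j + 2)).filter fun i => 2 ≤ H.dist x (u i)).image
            (fun i => s(x, u i))).card := by
        intro x hx
        rw [hoffGeo, Finset.mem_sdiff] at hx
        have hxoff : ∀ i, i < j + 2 → x ≠ u i := by
          intro i hi he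
          exact hx.2 (by
            rw [hgeoF, Finset.mem_image]
            exact ⟨i, Finset.mem_range.mpr hi, he.symm⟩)
        rw [Finset.card_image_of_injOn]
        swap
        · intro i hi i' hi' he
          simp only [Finset.mem_coe, Finset.mem_filter, Finset.mem_range] at hi hi'
          simp only [Sym2.eq_iff] at he
          rcases he with ⟨-, h2⟩ | ⟨h1, h2⟩
          · exact uinj _ _ (by omega) (by omega) h2
          · exact absurd h1 (hxoff i' (by omega))
        -- the bad set has at most 3 elements
        have hgb := Finset.card_filter_add_card_filter_not
          (s := Finset.range (j + 2)) (p := fun i => 2 ≤ H.dist x (u i))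
        rw [Finset.card_range] at hgb
        have hbad : ((Finset.range (j + 2)).filter fun i => ¬ (2 ≤ H.dist x (u i))).card ≤ 3 := by
          set Bad := (Finset.range (j + 2)).filter fun i => ¬ (2 ≤ H.dist x (u i)) with hBad
          rcases Finset.eq_empty_or_nonempty Bad with hB | hB
          · rw [hB]; simp
          · set i₀ := Bad.min' hB with hi₀
            have hi₀mem : i₀ ∈ Bad := Finset.min'_mem _ _
            have hsubB : Bad ⊆ Finset.Icc i₀ (i₀ + 2) := by
              intro i hi
              have hle : i₀ ≤ i := Finset.min'_le _ _ hi
              rw [hBad, Finset.mem_filter, Finset.mem_range] at hi hi₀mem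
              have ht1 : H.dist (u i₀) (u i) ≤ H.dist (u i₀) x + H.dist x (u i) :=
                hconn.dist_triangle
              have ht2 : H.dist (u i₀) x = H.dist x (u i₀) := SimpleGraph.dist_comm
              have hsep := usep i₀ i (by omega) (by omega) hle
              simp only [Finset.mem_Icc]
              omega
            exact le_trans (Finset.card_le_card hsubB) (by rw [Nat.card_Icc]; omega)
        omega
      calc offGeo.card * (j - 1) = ∑ _x ∈ offGeo, (j - 1) := by
            rw [Finset.sum_const, smul_eq_mul]
        _ ≤ _ := Finset.sum_le_sum hbound
    · -- pairwise disjoint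
      intro x hx x' hx' hne
      rw [Function.onFun, Finset.disjoint_left]
      intro p hp hp'
      rw [hoffGeo, Finset.mem_coe, Finset.mem_sdiff] at hx hx'
      simp only [Finset.mem_image, Finset.mem_filter, Finset.mem_range] at hp hp'
      obtain ⟨i, ⟨hi, -⟩, rfl⟩ := hp
      obtain ⟨i', ⟨hi', -⟩, he⟩ := hp'
      simp only [Sym2.eq_iff] at he
      rcases he with ⟨h1, -⟩ | ⟨h1, h2⟩
      · exact hne h1.symm
      · apply hx'.2
        rw [hgeoF, Finset.mem_image]
        exact ⟨i, Finset.mem_range.mpr hi, h1.symm⟩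
  have hSAsub : SA ⊆ NE := by
    intro p hp
    rw [hSA, Finset.mem_image] at hp
    obtain ⟨⟨k, a⟩, hka, rfl⟩ := hp
    simp only [Finset.mem_sigma, Finset.mem_Icc, Finset.mem_range] at hka
    obtain ⟨⟨hk2, hkj⟩, ha⟩ := hka
    rw [hNE, Finset.mem_filter]
    refine ⟨Finset.mem_univ _, ?_⟩
    show 2 ≤ pairDist H s(u a, u (a + k))
    rw [pairDist_mk]
    have := usep a (a + k) (by omega) (by omega) (by omega)
    omega
  have hSBsub : SB ⊆ NE := by
    intro p hp
    rw [hSB, Finset.mem_biUnion] at hp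
    obtain ⟨x, -, hp⟩ := hp
    simp only [Finset.mem_image, Finset.mem_filter, Finset.mem_range] at hp
    obtain ⟨i, ⟨-, hd⟩, rfl⟩ := hp
    rw [hNE, Finset.mem_filter]
    exact ⟨Finset.mem_univ _, by rw [pairDist_mk]; exact hd⟩
  have hdisjAB : Disjoint SA SB := by
    rw [Finset.disjoint_left]
    intro p hpA hpB
    rw [hSA, Finset.mem_image] at hpA
    obtain ⟨⟨k, a⟩, hka, rfl⟩ := hpA
    simp only [Finset.mem_sigma, Finset.mem_Icc, Finset.mem_range] at hka
    obtain ⟨⟨hk2, hkj⟩, ha⟩ := hka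
    rw [hSB, Finset.mem_biUnion] at hpB
    obtain ⟨x, hx, hp⟩ := hpB
    rw [hoffGeo, Finset.mem_sdiff] at hx
    simp only [Finset.mem_image, Finset.mem_filter, Finset.mem_range] at hp
    obtain ⟨i, -, he⟩ := hp
    simp only [Sym2.eq_iff] at he
    apply hx.2
    rw [hgeoF, Finset.mem_image]
    rcases he with ⟨h1, -⟩ | ⟨h1, -⟩
    · exact ⟨a, Finset.mem_range.mpr (by omega), h1.symm⟩
    · exact ⟨a + k, Finset.mem_range.mpr (by omega), h1.symm⟩
  have hoffcard : n - (j + 2) ≤ offGeo.card := by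
    rw [hoffGeo, Finset.card_sdiff_of_subset (Finset.subset_univ _), Finset.card_univ, hcard]
    have : geoF.card ≤ j + 2 := le_trans Finset.card_image_le (by rw [Finset.card_range])
    omega
  have htotal : (∑ k ∈ Finset.Icc 2 (j + 1), (j + 2 - k)) + (n - (j + 2)) * (j - 1) ≤ NE.card := by
    calc (∑ k ∈ Finset.Icc 2 (j + 1), (j + 2 - k)) + (n - (j + 2)) * (j - 1)
        ≤ SA.card + offGeo.card * (j - 1) := by
          rw [hSAcard]
          exact Nat.add_le_add_left (Nat.mul_le_mul_right _ hoffcard) _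
      _ ≤ SA.card + SB.card := Nat.add_le_add_left hSBcard _
      _ = (SA ∪ SB).card := (Finset.card_union_of_disjoint hdisjAB).symm
      _ ≤ NE.card := Finset.card_le_card (Finset.union_subset hSAsub hSBsub)
  have := gsum_arith (n := n) hj
  omega

end FinalCase

end WienerAux


namespace WienerAux

open SimpleGraph

/-- **Main counting lemma**: a connected graph with a pair at distance `> j`
has at least `∑_{s=2}^{j} (n-s)` pairs at distance in `[2, j]`. -/
theorem claimC : ∀ (N : ℕ) {V : Type*} [Fintype V] [DecidableEq V] (H : SimpleGraph V),
    H.Connected → Fintype.card V = N → ∀ j : ℕ, 1 ≤ j →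
    (∃ x y : V, j + 1 ≤ H.dist x y) → gsum N j ≤ midCount H j := by
  intro N
  induction N using Nat.strong_induction_on with
  | _ N IH =>
    intro V _ _ H hconn hcard j hj hfar
    classical
    obtain ⟨a, b, hab⟩ := hfar
    obtain ⟨w, -, hw⟩ := Finset.exists_max_image Finset.univ (H.dist a) ⟨a, Finset.mem_univ a⟩
    replace hw : ∀ x, H.dist a x ≤ H.dist a w := fun x => hw x (Finset.mem_univ x)
    have hwb : j + 1 ≤ H.dist a w := le_trans hab (hw b)
    have hwa : w ≠ a := by
      rintro rfl
      rw [SimpleGraph.dist_self] at hwb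
      omega
    have hconn1 := connected_induce_compl hconn a w hw hwa
    have hNpos : 1 ≤ N := by
      rw [← hcard]
      exact Fintype.card_pos_iff.mpr ⟨a⟩
    have hcard1 : Fintype.card ↥{x : V | x ≠ w} = N - 1 := by
      rw [← hcard]
      simp only [Set.coe_setOf, ne_eq]
      rw [Fintype.card_subtype_compl, Fintype.card_subtype_eq]
    by_cases hc1 : ∃ x y : ↥{x : V | x ≠ w}, j + 1 ≤ (H.induce {x : V | x ≠ w}).dist x y
    · have h1 := IH (N - 1) (by omega) (H.induce {x : V | x ≠ w}) hconn1 hcard1 j hj hc1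
      have h2 := midCount_delete hconn w hconn1 hj
        ⟨a, by rw [SimpleGraph.dist_comm]; exact hwb⟩
      have h3 := gsum_step (n := N) (j := j)
      omega
    · obtain ⟨z, -, hz⟩ := Finset.exists_max_image Finset.univ (H.dist w) ⟨w, Finset.mem_univ w⟩
      replace hz : ∀ x, H.dist w x ≤ H.dist w z := fun x => hz x (Finset.mem_univ x)
      have hwz : j + 1 ≤ H.dist w z := by
        have : H.dist w a = H.dist a w := SimpleGraph.dist_comm
        have := hz a
        omega
      have hzw : z ≠ w := by
        rintro rfl
        rw [SimpleGraph.dist_self] at hwz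
        omega
      have hconn2 := connected_induce_compl hconn w z hz hzw
      have hcard2 : Fintype.card ↥{x : V | x ≠ z} = N - 1 := by
        rw [← hcard]
        simp only [Set.coe_setOf, ne_eq]
        rw [Fintype.card_subtype_compl, Fintype.card_subtype_eq]
      by_cases hc2 : ∃ x y : ↥{x : V | x ≠ z}, j + 1 ≤ (H.induce {x : V | x ≠ z}).dist x y
      · have h1 := IH (N - 1) (by omega) (H.induce {x : V | x ≠ z}) hconn2 hcard2 j hj hc2
        have h2 := midCount_delete hconn z hconn2 hj
          ⟨w, by rw [SimpleGraph.dist_comm]; exact hwz⟩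
        have h3 := gsum_step (n := N) (j := j)
        omega
      · push_neg at hc1 hc2
        have hwzne : w ≠ z := by
          rintro rfl
          rw [SimpleGraph.dist_self] at hwz
          omega
        have huniq : ∀ x y : V, j + 1 ≤ H.dist x y → s(x, y) = s(w, z) := by
          intro x y hxy
          have hxw : x = w ∨ y = w := by
            by_contra hcon
            push_neg at hcon
            have h1 := hc1 ⟨x, hcon.1⟩ ⟨y, hcon.2⟩
            have h2 : H.dist x y ≤ (H.induce {x : V | x ≠ w}).dist ⟨x, hcon.1⟩ ⟨y, hcon.2⟩ :=
              dist_le_induce_dist (hconn1 ⟨x, hcon.1⟩ ⟨y, hcon.2⟩)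
            omega
          have hxz : x = z ∨ y = z := by
            by_contra hcon
            push_neg at hcon
            have h1 := hc2 ⟨x, hcon.1⟩ ⟨y, hcon.2⟩
            have h2 : H.dist x y ≤ (H.induce {x : V | x ≠ z}).dist ⟨x, hcon.1⟩ ⟨y, hcon.2⟩ :=
              dist_le_induce_dist (hconn2 ⟨x, hcon.1⟩ ⟨y, hcon.2⟩)
            omega
          refine Sym2.eq_iff.mpr ?_
          rcases hxw with h1 | h1
          · rcases hxz with h2 | h2
            · exact absurd (h1.symm.trans h2) hwzne
            · exact Or.inl ⟨h1, h2⟩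
          · rcases hxz with h2 | h2
            · exact Or.inr ⟨h2, h1⟩
            · exact absurd (h1.symm.trans h2) hwzne
        exact midCount_of_unique_far hconn hcard hj hwz huniq

end WienerAux


namespace WienerAux

open SimpleGraph

section PK

variable {n q t : ℕ}

/-- The potential function certifying lower bounds on distances in `pathComplete`. -/
def psi (q t v : ℕ) : ℕ := if v < q - t then q - 2 else if v < q then q - 1 else v

lemma psi_lipschitz (ht : 1 ≤ t) {x y : Fin n} (h : (pathComplete n q t).Adj x y) :
    psi q t y.val ≤ psi q t x.val + 1 := by
  obtain ⟨hne, hcase⟩ := h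
  unfold psi
  rcases hcase with h | ⟨h1, h2⟩ | ⟨h1, h2⟩ <;> split_ifs <;> omega

lemma adj_of_psi_gap (ht : 1 ≤ t) {x y : Fin n} (hxy : x.val < y.val)
    (h : psi q t y.val ≤ psi q t x.val + 1) : (pathComplete n q t).Adj x y := by
  refine ⟨fun he => absurd (congrArg Fin.val he) (Nat.ne_of_lt hxy), ?_⟩
  unfold psi at h
  split_ifs at h <;> omega

lemma pk_adj_succ (a : ℕ) (h : a + 1 < n) :
    (pathComplete n q t).Adj ⟨a, by omega⟩ ⟨a + 1, h⟩ := by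
  refine ⟨fun he => by simpa using congrArg Fin.val he, ?_⟩
  simp only []
  omega

lemma pk_connected (hn : 0 < n) : (pathComplete n q t).Connected := by
  have key : ∀ (a : ℕ) (h : a < n), (pathComplete n q t).Reachable ⟨a, h⟩ ⟨0, hn⟩ := by
    intro a
    induction a with
    | zero => intro h; rfl
    | succ a ih =>
        intro h
        exact ((pk_adj_succ a h).reachable).symm.trans (ih (by omega))
  rw [SimpleGraph.connected_iff]
  refine ⟨fun x y => ?_, ⟨⟨0, hn⟩⟩⟩
  have hx := key x.val x.2
  have hy := key y.val y.2
  exact hx.trans hy.symm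

lemma pk_dist_ge (ht : 1 ≤ t) (hn : 0 < n) (x y : Fin n) :
    psi q t y.val ≤ psi q t x.val + (pathComplete n q t).dist x y := by
  obtain ⟨p, hp⟩ := ((pk_connected hn) x y).exists_walk_length_eq_dist
  rw [← hp]
  clear hp
  induction p with
  | nil => simp
  | cons hadj p ih =>
      have h1 := psi_lipschitz ht hadj
      simp only [SimpleGraph.Walk.length_cons]
      omega

end PK

section Transfer

variable {W : Type*} [Fintype W] [LinearOrder W] [DecidableEq W]

lemma sym2_count_ordered (Q : Sym2 W → Prop) [DecidablePred Q] :
    (Finset.univ.filter fun p : Sym2 W => ¬ p.IsDiag ∧ Q p).card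
      = (Finset.univ.filter fun xy : W × W => xy.1 < xy.2 ∧ Q s(xy.1, xy.2)).card := by
  classical
  symm
  apply Finset.card_bij (fun xy _ => s(xy.1, xy.2))
  · intro xy hxy
    simp only [Finset.mem_filter, Finset.mem_univ, true_and] at hxy ⊢
    exact ⟨by simp only [Sym2.mk_isDiag_iff]; exact ne_of_lt hxy.1, hxy.2⟩
  · intro xy hxy xy' hxy' he
    simp only [Finset.mem_filter, Finset.mem_univ, true_and] at hxy hxy'
    rw [Sym2.eq_iff] at he
    rcases he with ⟨h1, h2⟩ | ⟨h1, h2⟩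
    · exact Prod.ext h1 h2
    · exfalso
      have := hxy.1
      have := hxy'.1
      rw [← h1, ← h2] at this
      exact absurd (lt_trans hxy.1 this) (lt_irrefl _)
  · intro p hp
    induction p with
    | _ x y =>
      simp only [Finset.mem_filter, Finset.mem_univ, true_and, Sym2.mk_isDiag_iff] at hp
      obtain ⟨hne, hQ⟩ := hp
      rcases lt_or_gt_of_ne hne with hlt | hlt
      · exact ⟨(x, y), by simp only [Finset.mem_filter, Finset.mem_univ, true_and]; exact ⟨hlt, hQ⟩, rfl⟩
      · exact ⟨(y, x), by
          simp only [Finset.mem_filter, Finset.mem_univ, true_and]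
          exact ⟨hlt, by rwa [Sym2.eq_swap]⟩, Sym2.eq_swap⟩

end Transfer

end WienerAux


namespace WienerAux

open SimpleGraph

/-- Number of unordered pairs at distance at most `j`. -/
noncomputable def closeCount {V : Type*} [Fintype V] [DecidableEq V] (H : SimpleGraph V) (j : ℕ) : ℕ :=
  (Finset.univ.filter fun p : Sym2 V => ¬ p.IsDiag ∧ pairDist H p ≤ j).card

section PKCount

variable {n q t : ℕ}

lemma psi_struct (ht : 1 ≤ t) (htq : t ≤ q) {x y : Fin n} (hxy : x.val < y.val) {k : ℕ}
    (hk : 2 ≤ k) (hgap : psi q t y.val - psi q t x.val = k) :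
    y.val = psi q t x.val + k ∧ x.val < n - k := by
  have hy : y.val < n := y.isLt
  have hx : x.val < n := x.isLt
  unfold psi at hgap ⊢
  split_ifs at hgap ⊢ <;> omega

lemma pk_closeCount_le {m j : ℕ} (ht : 1 ≤ t) (htq : t ≤ q) (hq : q ≤ n) (hn : 0 < n)
    (hj : 1 ≤ j) (hm : (pathComplete n q t).edgeSet.ncard = m) :
    closeCount (pathComplete n q t) j ≤ m + gsum n j := by
  classical
  unfold closeCount
  rw [sym2_count_ordered]
  set PK := pathComplete n q t with hPKdef
  set OC := Finset.univ.filter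
    (fun xy : Fin n × Fin n => xy.1 < xy.2 ∧ pairDist PK s(xy.1, xy.2) ≤ j) with hOC
  have hmapsto : ∀ xy ∈ OC, psi q t xy.2.val - psi q t xy.1.val ∈ Finset.range (j + 1) := by
    intro xy hxy
    rw [hOC, Finset.mem_filter] at hxy
    obtain ⟨-, -, hd⟩ := hxy
    rw [pairDist_mk] at hd
    have h2 := pk_dist_ge (q := q) (t := t) ht hn xy.1 xy.2
    rw [← hPKdef] at h2
    rw [Finset.mem_range]
    omega
  rw [Finset.card_eq_sum_card_fiberwise hmapsto]
  have hrange : Finset.range (j + 1) = insert 0 (insert 1 (Finset.Icc 2 j)) := by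
    ext k
    simp only [Finset.mem_range, Finset.mem_insert, Finset.mem_Icc]
    omega
  have h0ni : (0 : ℕ) ∉ insert 1 (Finset.Icc 2 j) := by simp
  have h1ni : (1 : ℕ) ∉ Finset.Icc 2 j := by simp
  rw [hrange, Finset.sum_insert h0ni, Finset.sum_insert h1ni]
  -- edges bound
  have hedge : (OC.filter fun xy => psi q t xy.2.val - psi q t xy.1.val = 0).card
      + (OC.filter fun xy => psi q t xy.2.val - psi q t xy.1.val = 1).card ≤ m := by
    have hdisj : Disjoint (OC.filter fun xy => psi q t xy.2.val - psi q t xy.1.val = 0)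
        (OC.filter fun xy => psi q t xy.2.val - psi q t xy.1.val = 1) := by
      rw [Finset.disjoint_left]
      intro p h1 h2
      simp only [Finset.mem_filter] at h1 h2
      omega
    rw [← Finset.card_union_of_disjoint hdisj, ← Finset.filter_or]
    have hcongr : (OC.filter fun xy =>
        psi q t xy.2.val - psi q t xy.1.val = 0 ∨ psi q t xy.2.val - psi q t xy.1.val = 1)
        = OC.filter fun xy => psi q t xy.2.val - psi q t xy.1.val ≤ 1 := by
      apply Finset.filter_congr
      intro xy _
      constructor
      · intro h; omega
      · intro h; omega
    rw [hcongr]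
    set F01 := OC.filter fun xy => psi q t xy.2.val - psi q t xy.1.val ≤ 1 with hF01
    have hltF : ∀ xy ∈ F01, xy.1 < xy.2 := by
      intro xy hxy
      rw [hF01, Finset.mem_filter, hOC, Finset.mem_filter] at hxy
      exact hxy.1.2.1
    set E := F01.image (fun xy => s(xy.1, xy.2)) with hE
    have hEcard : E.card = F01.card := by
      rw [hE]
      apply Finset.card_image_of_injOn
      intro xy hxy xy' hxy' he
      rw [Finset.mem_coe] at hxy hxy'
      have h1 := hltF _ hxy
      have h2 := hltF _ hxy'
      rw [Sym2.eq_iff] at he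
      rcases he with ⟨ha, hb⟩ | ⟨ha, hb⟩
      · exact Prod.ext ha hb
      · exfalso
        rw [← ha, ← hb] at h2
        exact absurd (lt_trans h1 h2) (lt_irrefl _)
    have hEsub : ↑E ⊆ PK.edgeSet := by
      intro p hp
      rw [Finset.mem_coe, hE, Finset.mem_image] at hp
      obtain ⟨xy, hxy, rfl⟩ := hp
      rw [hF01, Finset.mem_filter] at hxy
      obtain ⟨hxyOC, hgap⟩ := hxy
      rw [hOC, Finset.mem_filter] at hxyOC
      rw [SimpleGraph.mem_edgeSet]
      exact adj_of_psi_gap ht hxyOC.2.1 (by omega)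
    calc F01.card = E.card := hEcard.symm
      _ = (↑E : Set (Sym2 (Fin n))).ncard := (Set.ncard_coe_finset E).symm
      _ ≤ PK.edgeSet.ncard := Set.ncard_le_ncard hEsub (Set.toFinite _)
      _ = m := hm
  -- middle bounds
  have hmid : ∀ k ∈ Finset.Icc 2 j,
      (OC.filter fun xy => psi q t xy.2.val - psi q t xy.1.val = k).card ≤ n - k := by
    intro k hk
    simp only [Finset.mem_Icc] at hk
    have := Finset.card_range (n - k)
    rw [← Finset.card_range (n - k)]
    apply Finset.card_le_card_of_injOn (fun xy => xy.1.val)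
    · intro xy hxy
      rw [Finset.mem_coe, Finset.mem_filter, hOC, Finset.mem_filter] at hxy
      obtain ⟨⟨-, hlt, -⟩, hgap⟩ := hxy
      have := psi_struct ht htq hlt hk.1 hgap
      rw [Finset.mem_coe, Finset.mem_range]
      exact this.2
    · intro xy hxy xy' hxy' he
      rw [Finset.mem_coe, Finset.mem_filter, hOC, Finset.mem_filter] at hxy hxy'
      obtain ⟨⟨-, hlt, -⟩, hgap⟩ := hxy
      obtain ⟨⟨-, hlt', -⟩, hgap'⟩ := hxy'
      have hs := psi_struct ht htq hlt hk.1 hgap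
      have hs' := psi_struct ht htq hlt' hk.1 hgap'
      have h1 : xy.1 = xy'.1 := Fin.ext he
      have h2 : xy.2 = xy'.2 := by
        apply Fin.ext
        rw [hs.1, hs'.1, h1]
      exact Prod.ext h1 h2
  have hgsum : ∑ k ∈ Finset.Icc 2 j,
      (OC.filter fun xy => psi q t xy.2.val - psi q t xy.1.val = k).card ≤ gsum n j :=
    Finset.sum_le_sum hmid
  have := hedge
  unfold gsum at hgsum ⊢
  omega

end PKCount

end WienerAux


namespace WienerAux

open SimpleGraph

section Assemble

variable {V : Type*} [Fintype V] [DecidableEq V] {H : SimpleGraph V}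

lemma isDiag_pairDist {p : Sym2 V} (hp : p.IsDiag) : pairDist H p = 0 := by
  induction p with
  | _ x y =>
    rw [Sym2.mk_isDiag_iff] at hp
    rw [pairDist_mk, hp, SimpleGraph.dist_self]

lemma closeCount_ge_of_far (hconn : H.Connected) {n m j : ℕ} (hcard : Fintype.card V = n)
    (hm : H.edgeSet.ncard = m) (hj : 1 ≤ j) (hfar : ∃ x y : V, j + 1 ≤ H.dist x y) :
    m + gsum n j ≤ closeCount H j := by
  classical
  unfold closeCount
  have e1 : m ≤ (Finset.univ.filter fun p : Sym2 V => ¬ p.IsDiag ∧ pairDist H p ≤ 1).card := by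
    rw [← hm, ← Set.ncard_coe_finset]
    apply Set.ncard_le_ncard _ (Set.toFinite _)
    intro p hp
    induction p with
    | _ x y =>
      rw [SimpleGraph.mem_edgeSet] at hp
      simp only [Finset.mem_coe, Finset.mem_filter, Finset.mem_univ, true_and, pairDist_mk,
        Sym2.mk_isDiag_iff]
      exact ⟨hp.ne, le_of_eq (SimpleGraph.dist_eq_one_iff_adj.mpr hp)⟩
  have e2 := claimC n H hconn hcard j hj hfar
  rw [midCount] at e2
  set A := Finset.univ.filter fun p : Sym2 V => ¬ p.IsDiag ∧ pairDist H p ≤ 1 with hA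
  set B := Finset.univ.filter fun p : Sym2 V => 2 ≤ pairDist H p ∧ pairDist H p ≤ j with hB
  have hdisj : Disjoint A B := by
    rw [Finset.disjoint_left]
    intro p h1 h2
    rw [hA, Finset.mem_filter] at h1
    rw [hB, Finset.mem_filter] at h2
    omega
  have hsub : A ∪ B ⊆ Finset.univ.filter fun p : Sym2 V => ¬ p.IsDiag ∧ pairDist H p ≤ j := by
    intro p hp
    rcases Finset.mem_union.mp hp with hp | hp
    · rw [hA, Finset.mem_filter] at hp
      rw [Finset.mem_filter]
      exact ⟨hp.1, hp.2.1, by omega⟩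
    · rw [hB, Finset.mem_filter] at hp
      rw [Finset.mem_filter]
      refine ⟨hp.1, ?_, hp.2.2⟩
      intro hdiag
      have := isDiag_pairDist (H := H) hdiag
      omega
  calc m + gsum n j ≤ A.card + B.card := Nat.add_le_add e1 e2
    _ = (A ∪ B).card := (Finset.card_union_of_disjoint hdisj).symm
    _ ≤ _ := Finset.card_le_card hsub

lemma closeCount_le_total (H : SimpleGraph V) (j : ℕ) :
    closeCount H j ≤ (Finset.univ.filter fun p : Sym2 V => ¬ p.IsDiag).card := by
  unfold closeCount
  apply Finset.card_le_card
  intro p hp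
  rw [Finset.mem_filter] at hp ⊢
  exact ⟨hp.1, hp.2.1⟩

lemma closeCount_eq_total_of_nofar {j : ℕ} (hnofar : ∀ x y : V, H.dist x y ≤ j) :
    closeCount H j = (Finset.univ.filter fun p : Sym2 V => ¬ p.IsDiag).card := by
  unfold closeCount
  congr 1
  apply Finset.filter_congr
  intro p _
  simp only [and_iff_left_iff_imp]
  intro _
  induction p with
  | _ x y => rw [pairDist_mk]; exact hnofar x y

lemma closeCount_zero (hconn : H.Connected) : closeCount H 0 = 0 := by
  unfold closeCount
  rw [Finset.card_eq_zero, Finset.filter_eq_empty_iff]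
  intro p _
  induction p with
  | _ x y =>
    rw [Sym2.mk_isDiag_iff, pairDist_mk]
    intro h
    have := hconn.pos_dist_of_ne h.1
    omega

lemma total_transfer {W : Type*} [Fintype W] [DecidableEq W]
    (h : Fintype.card V = Fintype.card W) :
    (Finset.univ.filter fun p : Sym2 V => ¬ p.IsDiag).card
      = (Finset.univ.filter fun p : Sym2 W => ¬ p.IsDiag).card := by
  obtain ⟨e⟩ := Fintype.card_eq.mp h
  apply Finset.card_bij (fun p _ => p.map e)
  · intro p hp
    rw [Finset.mem_filter] at hp ⊢
    refine ⟨Finset.mem_univ _, ?_⟩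
    induction p with
    | _ x y =>
      rw [Sym2.mk_isDiag_iff] at hp
      rw [Sym2.map_pair_eq, Sym2.mk_isDiag_iff]
      exact fun he => hp.2 (e.injective he)
  · intro p hp p' hp' he
    exact Sym2.map.injective e.injective he
  · intro p hp
    refine ⟨p.map e.symm, ?_, ?_⟩
    · rw [Finset.mem_filter] at hp ⊢
      refine ⟨Finset.mem_univ _, ?_⟩
      induction p with
      | _ x y =>
        rw [Sym2.mk_isDiag_iff] at hp
        rw [Sym2.map_pair_eq, Sym2.mk_isDiag_iff]
        exact fun he => hp.2 (e.symm.injective he)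
    · induction p with
      | _ x y => simp [Sym2.map_pair_eq]

/-- Abel summation for the generalised Wiener index. -/
lemma wienerF_eq (H : SimpleGraph V) (hconn : H.Connected) {n : ℕ}
    (hcard : Fintype.card V = n) (f : ℕ → ℝ) :
    wienerF H f = ((Finset.univ.filter fun p : Sym2 V => ¬ p.IsDiag).card : ℝ) * f n
      + ∑ i ∈ Finset.range n, (f i - f (i + 1)) * (closeCount H i : ℝ) := by
  classical
  unfold wienerF
  have key : ∀ p ∈ (Finset.univ.filter fun p : Sym2 V => ¬ p.IsDiag),
      f (pairDist H p) = f n + ∑ i ∈ Finset.range n, ite (pairDist H p ≤ i) (f i - f (i + 1)) 0 := by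
    intro p hp
    set d := pairDist H p with hd
    have hdn : d < n := by
      rw [← hcard]
      induction p with
      | _ x y => rw [hd, pairDist_mk]; exact dist_lt_card hconn x y
    have h1 : ∑ i ∈ Finset.range n, ite (d ≤ i) (f i - f (i + 1)) 0
        = ∑ i ∈ (Finset.range n).filter (fun i => d ≤ i), (f i - f (i + 1)) := by
      rw [Finset.sum_filter]
    have h2 : (Finset.range n).filter (fun i => d ≤ i) = Finset.Ico d n := by
      ext i
      simp only [Finset.mem_filter, Finset.mem_range, Finset.mem_Ico]
      omega
    have h3 : ∑ i ∈ Finset.Ico d n, (f i - f (i + 1)) = f d - f n := by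
      rw [Finset.sum_Ico_eq_sub _ (le_of_lt hdn)]
      rw [Finset.sum_range_sub' f, Finset.sum_range_sub' f]
      ring
    rw [h1, h2, h3]
    ring
  rw [Finset.sum_congr rfl key, Finset.sum_add_distrib, Finset.sum_const, nsmul_eq_mul]
  congr 1
  rw [Finset.sum_comm]
  apply Finset.sum_congr rfl
  intro i _
  rw [← Finset.sum_filter, Finset.filter_filter, Finset.sum_const, nsmul_eq_mul]
  rw [closeCount]
  ring

end Assemble

end WienerAux

/-- Among connected graphs with `n` vertices and `m` edges, the path-complete graph
`PK_{n,m}` minimises every generalised Wiener index `W_f` with `f` nonincreasing. -/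
theorem wienerF_ge_wienerF_pathComplete {V : Type*} [Fintype V] [DecidableEq V]
    (G : SimpleGraph V) (hG : G.Connected) (n m : ℕ) (hn : 2 ≤ n)
    (hm₁ : n - 1 ≤ m) (hm₂ : m ≤ n * (n - 1) / 2)
    (hcard : Fintype.card V = n) (hsize : G.edgeSet.ncard = m)
    (f : ℕ → ℝ) (hf : Antitone f)
    (q t : ℕ) (ht : 1 ≤ t) (htq : t ≤ q) (hq : q ≤ n)
    (hPK : (pathComplete n q t).edgeSet.ncard = m) :
    wienerF (pathComplete n q t) f ≤ wienerF G f := by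
  classical
  have hn0 : 0 < n := by omega
  have hPKconn : (pathComplete n q t).Connected := WienerAux.pk_connected hn0
  have hcardFin : Fintype.card (Fin n) = n := Fintype.card_fin n
  rw [WienerAux.wienerF_eq G hG hcard f,
    WienerAux.wienerF_eq (pathComplete n q t) hPKconn hcardFin f]
  have htotal : (Finset.univ.filter fun p : Sym2 (Fin n) => ¬ p.IsDiag).card
      = (Finset.univ.filter fun p : Sym2 V => ¬ p.IsDiag).card :=
    WienerAux.total_transfer (by rw [hcard, hcardFin])
  apply add_le_add
  · rw [htotal]
  · apply Finset.sum_le_sum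
    intro i _
    have hmono : 0 ≤ f i - f (i + 1) := by
      have := hf (Nat.le_succ i)
      linarith
    apply mul_le_mul_of_nonneg_left _ hmono
    rw [Nat.cast_le]
    rcases Nat.eq_zero_or_pos i with rfl | hipos
    · rw [WienerAux.closeCount_zero hPKconn]
      exact Nat.zero_le _
    · by_cases hfar : ∃ x y : V, i + 1 ≤ G.dist x y
      · calc WienerAux.closeCount (pathComplete n q t) i ≤ m + WienerAux.gsum n i :=
              WienerAux.pk_closeCount_le ht htq hq hn0 hipos hPK
          _ ≤ WienerAux.closeCount G i :=
              WienerAux.closeCount_ge_of_far hG hcard hsize hipos hfar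
      · push_neg at hfar
        have h1 : WienerAux.closeCount G i
            = (Finset.univ.filter fun p : Sym2 V => ¬ p.IsDiag).card :=
          WienerAux.closeCount_eq_total_of_nofar (fun x y => by have := hfar x y; omega)
        rw [h1, ← htotal]
        exact WienerAux.closeCount_le_total _ _
end

section
/- Let κ be a positive even integer and let G be a κ-connected finite simple graph with n vertices. Then for every nondecreasing function f : ℕ → ℝ, W_f(G) ≤ W_f(C_n^{κ/2}), where C_n^{κ/2} is the (κ/2)-th power of the cycle on n vertices. -/
open Finset

/-- The `k`-th power of a graph: two distinct vertices are adjacent iff their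
distance is at most `k`. -/
def graphPow {V : Type*} (G : SimpleGraph V) (k : ℕ) : SimpleGraph V where
  Adj u v := u ≠ v ∧ G.dist u v ≤ k
  symm := by
    constructor
    rintro u v ⟨h1, h2⟩
    exact ⟨h1.symm, by rwa [SimpleGraph.dist_comm]⟩
  loopless := by constructor; rintro v ⟨h, _⟩; exact h rfl

/-- `G` is `κ`-connected: it has more than `κ` vertices and deleting any set of
fewer than `κ` vertices leaves a connected graph. -/
def KConnected {V : Type*} [Fintype V] (G : SimpleGraph V) (κ : ℕ) : Prop :=
  κ < Fintype.card V ∧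
    ∀ S : Finset V, S.card < κ → (G.induce ((↑S : Set V)ᶜ)).Connected

-- intermediate value along a walk
lemma exists_dist_eq_on_walk {V : Type*} {G : SimpleGraph V} (hc : G.Connected) (u : V) :
    ∀ {a b : V} (p : G.Walk a b) (i : ℕ), G.dist u a ≤ i → i ≤ G.dist u b →
      ∃ x ∈ p.support, G.dist u x = i
  | a, _, SimpleGraph.Walk.nil, i, ha, hb => ⟨a, by simp, le_antisymm ha hb⟩
  | a, b, SimpleGraph.Walk.cons (v := c) h q, i, ha, hb => by
    rcases eq_or_lt_of_le ha with he | hlt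
    · exact ⟨a, by simp, he⟩
    · have h1 : G.dist a c ≤ 1 := by simpa using SimpleGraph.dist_le h.toWalk
      have h2 : G.dist u c ≤ G.dist u a + 1 :=
        le_trans (hc.dist_triangle (u := u) (v := a) (w := c)) (by omega)
      obtain ⟨x, hx, hdx⟩ := exists_dist_eq_on_walk hc u q i (by omega) hb
      exact ⟨x, by simp [hx], hdx⟩

lemma kconn_connected {V : Type*} [Fintype V] {G : SimpleGraph V} {κ : ℕ} (hκ : 0 < κ)
    (hG : KConnected G κ) : G.Connected := by
  classical
  have h := hG.2 ∅ (by simpa using hκ)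
  have he : ((↑(∅ : Finset V) : Set V)ᶜ) = Set.univ := by simp
  rw [he] at h
  exact (SimpleGraph.induceUnivIso G).connected_iff.mp h

lemma sphere_card_ge {V : Type*} [Fintype V] [DecidableEq V] {G : SimpleGraph V} {κ : ℕ}
    (hκ : 0 < κ) (hG : KConnected G κ) (u v : V) (i : ℕ) (hi0 : 0 < i)
    (hiv : i < G.dist u v) :
    κ ≤ (univ.filter fun w => G.dist u w = i).card := by
  by_contra hlt
  push_neg at hlt
  set S := univ.filter fun w => G.dist u w = i with hS
  have hconn := hG.2 S hlt
  have hu : u ∈ ((↑S : Set V)ᶜ) := by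
    simp only [hS, Set.mem_compl_iff, coe_filter, Set.mem_setOf_eq, mem_univ, true_and,
      SimpleGraph.dist_self]
    omega
  have hv : v ∈ ((↑S : Set V)ᶜ) := by
    simp only [hS, Set.mem_compl_iff, coe_filter, Set.mem_setOf_eq, mem_univ, true_and]
    omega
  obtain ⟨p⟩ := hconn ⟨u, hu⟩ ⟨v, hv⟩
  have hcG : G.Connected := kconn_connected hκ hG
  obtain ⟨x, hx, hdx⟩ := exists_dist_eq_on_walk hcG u
    (p.map (SimpleGraph.Embedding.induce ((↑S : Set V)ᶜ)).toHom) i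
    (by show G.dist u u ≤ i; simp [SimpleGraph.dist_self]) (le_of_lt hiv)
  rw [SimpleGraph.Walk.support_map, List.mem_map] at hx
  obtain ⟨y, hy, rfl⟩ := hx
  have hyS : (y : V) ∉ S := fun hmem => (Set.mem_compl_iff _ _).mp y.2 (Finset.mem_coe.mpr hmem)
  exact hyS (by simp only [hS, mem_filter, mem_univ, true_and]; exact hdx)

lemma far_count_le {V : Type*} [Fintype V] [DecidableEq V] {G : SimpleGraph V} {κ : ℕ}
    (hκ : 0 < κ) (hG : KConnected G κ) (u : V) (t : ℕ) (ht : 2 ≤ t) :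
    (univ.filter fun v => t ≤ G.dist u v).card = 0 ∨
    (univ.filter fun v => t ≤ G.dist u v).card + κ * (t - 1) + 1 ≤ Fintype.card V := by
  obtain ⟨s, rfl⟩ : ∃ s, t = s + 2 := ⟨t - 2, by omega⟩
  set N := univ.filter fun v => s + 2 ≤ G.dist u v with hN
  rcases Nat.eq_zero_or_pos N.card with h0 | hpos
  · exact Or.inl h0
  right
  obtain ⟨v, hv⟩ := Finset.card_pos.mp hpos
  rw [hN, Finset.mem_filter] at hv
  have hdv : s + 2 ≤ G.dist u v := hv.2
  have hpart : Fintype.card V =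
      ∑ j ∈ Finset.range (s + 3), (univ.filter fun w => min (G.dist u w) (s + 2) = j).card := by
    rw [← Finset.card_univ]
    exact Finset.card_eq_sum_card_fiberwise (fun w _ => Finset.mem_range.mpr (by omega))
  rw [Finset.sum_range_succ, Finset.sum_range_succ'] at hpart
  have hQ0 : 1 ≤ (univ.filter fun w => min (G.dist u w) (s + 2) = 0).card := by
    apply Finset.card_pos.mpr
    exact ⟨u, by simp [SimpleGraph.dist_self]⟩
  have hQt : (univ.filter fun w => min (G.dist u w) (s + 2) = s + 2) = N := by
    rw [hN]; apply Finset.filter_congr; intro w _; omega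
  have hsph : ∀ j ∈ Finset.range (s + 1),
      κ ≤ (univ.filter fun w => min (G.dist u w) (s + 2) = j + 1).card := by
    intro j hj
    rw [Finset.mem_range] at hj
    have heq : (univ.filter fun w => min (G.dist u w) (s + 2) = j + 1)
        = univ.filter fun w => G.dist u w = j + 1 := by
      apply Finset.filter_congr; intro w _; omega
    rw [heq]
    exact sphere_card_ge hκ hG u v (j + 1) (by omega) (by omega)
  have hsum : κ * (s + 1) ≤
      ∑ j ∈ Finset.range (s + 1),
        (univ.filter fun w => min (G.dist u w) (s + 2) = j + 1).card := by
    have := Finset.card_nsmul_le_sum (Finset.range (s + 1))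
      (fun j => (univ.filter fun w => min (G.dist u w) (s + 2) = j + 1).card) κ hsph
    simpa [mul_comm] using this
  rw [hQt] at hpart
  have hst : s + 2 - 1 = s + 1 := rfl
  rw [hst]
  omega

lemma cycle_connected {n : ℕ} (hn : 1 ≤ n) : (SimpleGraph.cycleGraph n).Connected := by
  obtain ⟨k, rfl⟩ : ∃ k, n = k + 1 := ⟨n - 1, by omega⟩
  exact SimpleGraph.cycleGraph_connected

lemma pow_connected {n m : ℕ} (hn : 1 ≤ n) (hm : 1 ≤ m) :
    (graphPow (SimpleGraph.cycleGraph n) m).Connected := by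
  apply SimpleGraph.Connected.mono _ (cycle_connected hn)
  intro a b hab
  exact ⟨hab.ne, by rw [SimpleGraph.dist_eq_one_iff_adj.mpr hab]; omega⟩

open Fin.CommRing in
lemma cycle_drift {n : ℕ} [NeZero n] (hn : 3 ≤ n) :
    ∀ {a b : Fin n} (p : (SimpleGraph.cycleGraph n).Walk a b),
      ∃ d : ℤ, d.natAbs ≤ p.length ∧ b = a + (d : Fin n) := by
  intro a b p
  induction p with
  | nil => exact ⟨0, by simp⟩
  | @cons a c b h q ih =>
    obtain ⟨d, hd, rfl⟩ := ih
    have hone : ((1 : ℕ) : Fin n) = (1 : Fin n) := by norm_cast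
    rcases SimpleGraph.cycleGraph_adj'.mp h with h1 | h1
    · -- (a - c).val = 1, so c = a - 1
      have hthis : a - c = 1 := by
        rw [Fin.ext_iff, Fin.val_one' n, Nat.mod_eq_of_lt (by omega)]
        exact h1
      have hc : c = a + ((-1 : ℤ) : Fin n) := by
        push_cast
        linear_combination -hthis
      refine ⟨-1 + d, ?_, ?_⟩
      · have := Int.natAbs_add_le (-1) d
        simp only [SimpleGraph.Walk.length_cons]
        omega
      · rw [hc]; push_cast; ring
    · -- (c - a).val = 1, so c = a + 1
      have hthis : c - a = 1 := by
        rw [Fin.ext_iff, Fin.val_one' n, Nat.mod_eq_of_lt (by omega)]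
        exact h1
      have hc : c = a + ((1 : ℤ) : Fin n) := by
        push_cast
        linear_combination hthis
      refine ⟨1 + d, ?_, ?_⟩
      · have := Int.natAbs_add_le (1 : ℤ) d
        simp only [SimpleGraph.Walk.length_cons]
        omega
      · rw [hc]; push_cast; ring

open Fin.CommRing in
lemma pow_drift {n m : ℕ} [NeZero n] (hn : 3 ≤ n) :
    ∀ {a b : Fin n} (p : (graphPow (SimpleGraph.cycleGraph n) m).Walk a b),
      ∃ d : ℤ, d.natAbs ≤ m * p.length ∧ b = a + (d : Fin n) := by
  intro a b p
  induction p with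
  | nil => exact ⟨0, by simp⟩
  | @cons a c b h q ih =>
    obtain ⟨d2, hd2, rfl⟩ := ih
    obtain ⟨hne, hdist⟩ := h
    obtain ⟨w, hw⟩ := (cycle_connected (show 1 ≤ n by omega)).exists_walk_length_eq_dist a c
    obtain ⟨d1, hd1, rfl⟩ := cycle_drift hn w
    refine ⟨d1 + d2, ?_, by push_cast; ring⟩
    have := Int.natAbs_add_le d1 d2
    rw [hw] at hd1
    change (d1 + d2).natAbs ≤ m * (q.length + 1)
    have : m * (q.length + 1) = m * q.length + m := by ring
    omega

open Fin.CommRing in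
lemma pow_ball_card {n m : ℕ} [NeZero n] (hn : 3 ≤ n) (hm : 1 ≤ m) (i : Fin n) (r : ℕ) :
    (univ.filter fun j => (graphPow (SimpleGraph.cycleGraph n) m).dist i j ≤ r).card
      ≤ 2 * (m * r) + 1 := by
  classical
  set P := graphPow (SimpleGraph.cycleGraph n) m with hP
  have hPc : P.Connected := pow_connected (by omega) hm
  have hsub : (univ.filter fun j => P.dist i j ≤ r)
      ⊆ (Finset.Icc (-(m * r : ℤ)) (m * r)).image fun d : ℤ => i + (d : Fin n) := by
    intro j hj
    rw [Finset.mem_filter] at hj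
    obtain ⟨p, hp⟩ := hPc.exists_walk_length_eq_dist i j
    obtain ⟨d, hd, rfl⟩ := pow_drift hn p
    rw [hp] at hd
    apply Finset.mem_image.mpr
    refine ⟨d, Finset.mem_Icc.mpr ?_, rfl⟩
    have h1 : d.natAbs ≤ m * r := le_trans hd (by exact Nat.mul_le_mul_left m hj.2)
    omega
  calc (univ.filter fun j => P.dist i j ≤ r).card
      ≤ ((Finset.Icc (-(m * r : ℤ)) (m * r)).image fun d : ℤ => i + (d : Fin n)).card :=
        Finset.card_le_card hsub
    _ ≤ (Finset.Icc (-(m * r : ℤ)) (m * r)).card := Finset.card_image_le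
    _ = 2 * (m * r) + 1 := by rw [Int.card_Icc]; omega

lemma pow_far_count_ge {n m : ℕ} [NeZero n] (hn : 3 ≤ n) (hm : 1 ≤ m) (i : Fin n) (t : ℕ)
    (ht : 1 ≤ t) :
    n ≤ (univ.filter fun j => t ≤ (graphPow (SimpleGraph.cycleGraph n) m).dist i j).card
      + 2 * (m * (t - 1)) + 1 := by
  classical
  set P := graphPow (SimpleGraph.cycleGraph n) m with hP
  have hcover : (univ : Finset (Fin n)) ⊆
      (univ.filter fun j => t ≤ P.dist i j) ∪ (univ.filter fun j => P.dist i j ≤ t - 1) := by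
    intro j _
    rw [Finset.mem_union, Finset.mem_filter, Finset.mem_filter]
    simp only [mem_univ, true_and]
    omega
  have := Finset.card_le_card hcover
  have hcu := Finset.card_union_le (univ.filter fun j => t ≤ P.dist i j)
    (univ.filter fun j => P.dist i j ≤ t - 1)
  have hball := pow_ball_card hn hm i (t - 1)
  rw [← hP] at hball
  simp only [Finset.card_univ, Fintype.card_fin] at this
  omega

lemma layer_single (f : ℕ → ℝ) (M d : ℕ) (hd1 : 1 ≤ d) (hdM : d ≤ M) :
    f d = f 1 + ∑ t ∈ Finset.Ico 2 (M + 1), (if t ≤ d then f t - f (t - 1) else 0) := by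
  have h1 : ∑ t ∈ Finset.Ico 2 (M + 1), (if t ≤ d then f t - f (t - 1) else 0)
      = ∑ t ∈ (Finset.Ico 2 (M + 1)).filter (fun t => t ≤ d), (f t - f (t - 1)) :=
    (Finset.sum_filter _ _).symm
  have h2 : (Finset.Ico 2 (M + 1)).filter (fun t => t ≤ d) = Finset.Ico 2 (d + 1) := by
    ext t
    simp only [Finset.mem_filter, Finset.mem_Ico]
    omega
  have h3 : ∑ t ∈ Finset.Ico 2 (d + 1), (f t - f (t - 1))
      = ∑ k ∈ Finset.range (d + 1 - 2), (f (2 + k) - f (2 + k - 1)) :=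
    Finset.sum_Ico_eq_sum_range (fun t => f t - f (t - 1)) 2 (d + 1)
  have h4 : ∑ k ∈ Finset.range (d + 1 - 2), (f (2 + k) - f (2 + k - 1))
      = ∑ k ∈ Finset.range (d - 1), (f (k + 1 + 1) - f (k + 1)) := by
    apply Finset.sum_congr (by rw [show d + 1 - 2 = d - 1 from by omega])
    intro k _
    rw [show 2 + k = k + 1 + 1 from by omega, show k + 1 + 1 - 1 = k + 1 from by omega]
  have h5 := Finset.sum_range_sub (fun k => f (k + 1)) (d - 1)
  have h6 : d - 1 + 1 = d := by omega
  rw [h1, h2, h3, h4, h5, h6]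
  ring

lemma layer_sum {α : Type*} (s : Finset α) [DecidableEq α] (dfn : α → ℕ) (f : ℕ → ℝ) (M : ℕ)
    (hd : ∀ x ∈ s, 1 ≤ dfn x ∧ dfn x ≤ M) :
    ∑ x ∈ s, f (dfn x) = s.card * f 1 +
      ∑ t ∈ Finset.Ico 2 (M + 1),
        (f t - f (t - 1)) * ((s.filter fun x => t ≤ dfn x).card : ℝ) := by
  have h1 : ∑ x ∈ s, f (dfn x) = ∑ x ∈ s,
      (f 1 + ∑ t ∈ Finset.Ico 2 (M + 1), (if t ≤ dfn x then f t - f (t - 1) else 0)) := by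
    apply Finset.sum_congr rfl
    intro x hx
    exact layer_single f M (dfn x) (hd x hx).1 (hd x hx).2
  rw [h1, Finset.sum_add_distrib, Finset.sum_const, Finset.sum_comm]
  congr 1
  · rw [nsmul_eq_mul]
  apply Finset.sum_congr rfl
  intro t _
  rw [← Finset.sum_filter, Finset.sum_const, nsmul_eq_mul, mul_comm]

lemma two_mul_wienerF {V : Type*} [Fintype V] [DecidableEq V] (G : SimpleGraph V) (f : ℕ → ℝ) :
    2 * wienerF G f = ∑ u : V, ∑ v ∈ univ.filter (fun v => v ≠ u), f (G.dist u v) := by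
  classical
  set D : Finset (V × V) := (univ ×ˢ univ).filter (fun z => z.2 ≠ z.1) with hD
  have hsplit : ∑ z ∈ D, f (G.dist z.1 z.2)
      = ∑ u : V, ∑ v ∈ univ.filter (fun v => v ≠ u), f (G.dist u v) := by
    rw [hD, Finset.sum_filter, Finset.sum_product]
    apply Finset.sum_congr rfl
    intro u _
    rw [Finset.sum_filter]
  have hcomp : ∑ z ∈ D, f (G.dist z.1 z.2)
      = ∑ p ∈ D.image (fun z : V × V => s(z.1, z.2)),
          ((D.filter fun z => s(z.1, z.2) = p).card : ℕ) • f (pairDist G p) := by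
    have := Finset.sum_comp (fun p : Sym2 V => f (pairDist G p)) (fun z : V × V => s(z.1, z.2))
      (s := D)
    simpa [pairDist] using this
  have himg : D.image (fun z : V × V => s(z.1, z.2))
      = univ.filter (fun p : Sym2 V => ¬ p.IsDiag) := by
    ext p
    induction p with
    | _ a b =>
      simp only [Finset.mem_image, Finset.mem_filter, Finset.mem_univ, true_and, hD,
        Finset.mem_product, Sym2.isDiag_iff_proj_eq]
      constructor
      · rintro ⟨⟨x, y⟩, hz, hzp⟩
        rw [Sym2.eq_iff] at hzp
        rcases hzp with ⟨h1, h2⟩ | ⟨h1, h2⟩ <;> subst h1 <;> subst h2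
        · exact fun h => hz h.symm
        · exact hz
      · intro hab
        exact ⟨(a, b), fun h => hab h.symm, rfl⟩
  have hfib : ∀ p ∈ univ.filter (fun p : Sym2 V => ¬ p.IsDiag),
      (D.filter fun z => s(z.1, z.2) = p).card = 2 := by
    intro p hp
    induction p with
    | _ a b =>
      rw [Finset.mem_filter] at hp
      have hab : a ≠ b := by simpa [Sym2.isDiag_iff_proj_eq] using hp.2
      have : (D.filter fun z => s(z.1, z.2) = s(a, b)) = {(a, b), (b, a)} := by
        ext ⟨x, y⟩
        simp only [Finset.mem_filter, hD, Finset.mem_product, Finset.mem_univ, true_and,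
          Finset.mem_insert, Finset.mem_singleton, Sym2.eq_iff, Prod.mk.injEq]
        constructor
        · rintro ⟨hxy, ⟨h1, h2⟩ | ⟨h1, h2⟩⟩
          · exact Or.inl ⟨h1, h2⟩
          · exact Or.inr ⟨h1, h2⟩
        · rintro (⟨h1, h2⟩ | ⟨h1, h2⟩) <;> subst h1 <;> subst h2
          · exact ⟨Ne.symm hab, Or.inl ⟨rfl, rfl⟩⟩
          · exact ⟨hab, Or.inr ⟨rfl, rfl⟩⟩
      rw [this]
      rw [Finset.card_insert_of_notMem (by simp [Prod.ext_iff, hab]), Finset.card_singleton]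
  rw [← hsplit, hcomp, himg, wienerF, Finset.mul_sum]
  apply Finset.sum_congr rfl
  intro p hp
  rw [hfib p hp]
  simp [mul_comm]

/-- For even `κ > 0`, among `κ`-connected graphs with `n` vertices the `(κ/2)`-th
power of the cycle `C_n` maximises every generalised Wiener index `W_f` with `f`
nondecreasing. -/
theorem wienerF_le_wienerF_cyclePower {V : Type*} [Fintype V] [DecidableEq V]
    (κ : ℕ) (hκ : 0 < κ) (hκeven : Even κ)
    (G : SimpleGraph V) (hG : KConnected G κ)
    (n : ℕ) (hcard : Fintype.card V = n)
    (f : ℕ → ℝ) (hf : Monotone f) :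
    wienerF G f ≤ wienerF (graphPow (SimpleGraph.cycleGraph n) (κ / 2)) f := by
  classical
  obtain ⟨m, hm2⟩ := hκeven
  have hmpos : 1 ≤ m := by omega
  have hn3 : 3 ≤ n := by have := hG.1; omega
  haveI : NeZero n := ⟨by omega⟩
  rw [show κ / 2 = m from by omega]
  set P := graphPow (SimpleGraph.cycleGraph n) m with hP
  have hGc : G.Connected := kconn_connected hκ hG
  have hPc : P.Connected := pow_connected (by omega) hmpos
  have key : ∀ (u : V) (i : Fin n),
      ∑ v ∈ univ.filter (fun v => v ≠ u), f (G.dist u v)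
        ≤ ∑ j ∈ univ.filter (fun j => j ≠ i), f (P.dist i j) := by
    intro u i
    have hGA : ∀ v ∈ univ.filter (fun v => v ≠ u),
        1 ≤ G.dist u v ∧ G.dist u v ≤ n - 1 := by
      intro v hv
      rw [Finset.mem_filter] at hv
      refine ⟨hGc.pos_dist_of_ne (Ne.symm hv.2), ?_⟩
      obtain ⟨p, hp, hlen⟩ := hGc.exists_path_of_dist u v
      have hlt := hp.length_lt
      omega
    have hPB : ∀ j ∈ univ.filter (fun j => j ≠ i),
        1 ≤ P.dist i j ∧ P.dist i j ≤ n - 1 := by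
      intro j hj
      rw [Finset.mem_filter] at hj
      refine ⟨hPc.pos_dist_of_ne (Ne.symm hj.2), ?_⟩
      obtain ⟨p, hp, hlen⟩ := hPc.exists_path_of_dist i j
      have hlt := hp.length_lt
      rw [Fintype.card_fin] at hlt
      omega
    rw [layer_sum _ _ f (n - 1) hGA, layer_sum _ _ f (n - 1) hPB]
    have hcA : (univ.filter (fun v => v ≠ u)).card = n - 1 := by
      rw [Finset.filter_ne', Finset.card_erase_of_mem (Finset.mem_univ u),
        Finset.card_univ, hcard]
    have hcB : (univ.filter (fun j => j ≠ i)).card = n - 1 := by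
      rw [Finset.filter_ne', Finset.card_erase_of_mem (Finset.mem_univ i),
        Finset.card_univ, Fintype.card_fin]
    rw [hcA, hcB]
    refine add_le_add le_rfl ?_
    apply Finset.sum_le_sum
    intro t ht
    rw [Finset.mem_Ico] at ht
    have hw : 0 ≤ f t - f (t - 1) := sub_nonneg.mpr (hf (by omega))
    apply mul_le_mul_of_nonneg_left _ hw
    have hAG : (univ.filter (fun v => v ≠ u)).filter (fun v => t ≤ G.dist u v)
        = univ.filter (fun v => t ≤ G.dist u v) := by
      rw [Finset.filter_filter]
      apply Finset.filter_congr
      intro v _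
      refine ⟨fun h => h.2, fun h => ⟨fun he => ?_, h⟩⟩
      subst he
      rw [SimpleGraph.dist_self] at h
      omega
    have hBP : (univ.filter (fun j => j ≠ i)).filter (fun j => t ≤ P.dist i j)
        = univ.filter (fun j => t ≤ P.dist i j) := by
      rw [Finset.filter_filter]
      apply Finset.filter_congr
      intro j _
      refine ⟨fun h => h.2, fun h => ⟨fun he => ?_, h⟩⟩
      subst he
      rw [SimpleGraph.dist_self] at h
      omega
    rw [hAG, hBP]
    have h1 := far_count_le hκ hG u t ht.1
    have h2 := pow_far_count_ge hn3 hmpos i t (by omega)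
    rw [← hP] at h2
    have h3 : κ * (t - 1) = 2 * (m * (t - 1)) := by subst hm2; ring
    rw [hcard] at h1
    exact_mod_cast (by omega :
      (univ.filter (fun v => t ≤ G.dist u v)).card
        ≤ (univ.filter (fun j => t ≤ P.dist i j)).card)
  have h2G := two_mul_wienerF G f
  have h2P := two_mul_wienerF P f
  let e : V ≃ Fin n := Fintype.equivFinOfCardEq hcard
  have hsum : ∑ u : V, ∑ v ∈ univ.filter (fun v => v ≠ u), f (G.dist u v)
      ≤ ∑ u : V, ∑ j ∈ univ.filter (fun j => j ≠ e u), f (P.dist (e u) j) :=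
    Finset.sum_le_sum (fun u _ => key u (e u))
  have hre : ∑ u : V, ∑ j ∈ univ.filter (fun j => j ≠ e u), f (P.dist (e u) j)
      = ∑ i : Fin n, ∑ j ∈ univ.filter (fun j => j ≠ i), f (P.dist i j) :=
    Equiv.sum_comp e (fun i => ∑ j ∈ univ.filter (fun j => j ≠ i), f (P.dist i j))
  rw [hre] at hsum
  linarith [h2G, h2P, hsum]
end

section
/- Let κ be a positive even integer and let G be a κ-connected finite simple graph with n vertices. Then the Harary index satisfies H(G) ≥ H(C_n^{κ/2}), where C_n^{κ/2} is the (κ/2)-th power of the cycle on n vertices. -/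
open Finset

/-- The Harary index: the sum of the reciprocals of the distances over all
unordered pairs of distinct vertices. -/
noncomputable def hararyIdx {V : Type*} [Fintype V] [DecidableEq V]
    (G : SimpleGraph V) : ℝ :=
  ∑ p ∈ Finset.univ.filter (fun p : Sym2 V => ¬ p.IsDiag), (1 : ℝ) / (pairDist G p)

/-! ### Auxiliary lemmas -/

section Aux

lemma telescope (d n : ℕ) (hd : 1 ≤ d) (hdn : d ≤ n) :
    ∑ i ∈ Finset.Icc d n, (1/(i:ℝ) - 1/((i:ℝ)+1)) = 1/(d:ℝ) - 1/((n:ℝ)+1) := by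
  induction n with
  | zero => omega
  | succ m ih =>
    rcases Nat.lt_or_ge m d with h | h
    · have hdm : d = m + 1 := by omega
      subst hdm
      rw [Finset.Icc_self, Finset.sum_singleton]
    · rw [Finset.sum_Icc_succ_top (by omega : d ≤ m+1), ih h]
      push_cast; ring

lemma one_div_eq (d n : ℕ) (hd : 1 ≤ d) (hdn : d ≤ n) :
    (1:ℝ)/(d:ℝ) = 1/((n:ℝ)+1)
      + ∑ i ∈ Finset.Icc 1 n, (if d ≤ i then (1/(i:ℝ) - 1/((i:ℝ)+1)) else 0) := by
  rw [Finset.sum_ite, Finset.sum_const_zero, add_zero]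
  have hfil : (Finset.Icc 1 n).filter (fun i => d ≤ i) = Finset.Icc d n := by
    ext i; simp only [Finset.mem_Icc, Finset.mem_filter]; omega
  rw [hfil, telescope d n hd hdn]; ring

lemma harary_eq {V : Type*} [Fintype V] [DecidableEq V] (G : SimpleGraph V) (n : ℕ)
    (hbd : ∀ p : Sym2 V, ¬ p.IsDiag → 1 ≤ pairDist G p ∧ pairDist G p ≤ n) :
    hararyIdx G = ((univ.filter (fun p : Sym2 V => ¬ p.IsDiag)).card : ℝ) / ((n:ℝ)+1)
      + ∑ i ∈ Finset.Icc 1 n,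
          ((1/(i:ℝ) - 1/((i:ℝ)+1)) *
            ((univ.filter (fun p : Sym2 V => ¬ p.IsDiag ∧ pairDist G p ≤ i)).card : ℝ)) := by
  unfold hararyIdx
  have key : ∀ p ∈ univ.filter (fun p : Sym2 V => ¬ p.IsDiag),
      (1:ℝ)/(pairDist G p) = 1/((n:ℝ)+1)
        + ∑ i ∈ Finset.Icc 1 n,
            (if pairDist G p ≤ i then (1/(i:ℝ) - 1/((i:ℝ)+1)) else 0) := by
    intro p hp
    rw [Finset.mem_filter] at hp
    obtain ⟨h1, h2⟩ := hbd p hp.2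
    exact one_div_eq _ _ h1 h2
  rw [Finset.sum_congr rfl key, Finset.sum_add_distrib, Finset.sum_const, nsmul_eq_mul]
  congr 1
  · rw [mul_one_div]
  · rw [Finset.sum_comm]
    refine Finset.sum_congr rfl fun i _ => ?_
    rw [Finset.sum_ite, Finset.sum_const_zero, add_zero, Finset.sum_const, nsmul_eq_mul,
        Finset.filter_filter, mul_comm]

lemma pair_count {V : Type*} [Fintype V] [DecidableEq V] (G : SimpleGraph V) (i : ℕ) :
    ∑ u : V, (univ.filter (fun v => u ≠ v ∧ G.dist u v ≤ i)).card
      = 2 * (univ.filter (fun p : Sym2 V => ¬ p.IsDiag ∧ pairDist G p ≤ i)).card := by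
  have h1 : (univ.filter (fun x : V × V => x.1 ≠ x.2 ∧ G.dist x.1 x.2 ≤ i)).card
      = ∑ u : V, (univ.filter (fun v => u ≠ v ∧ G.dist u v ≤ i)).card := by
    rw [Finset.card_filter, Fintype.sum_prod_type]
    exact Finset.sum_congr rfl fun u _ => (Finset.card_filter _ _).symm
  rw [← h1]
  rw [Finset.card_eq_sum_card_fiberwise (f := fun x : V × V => Sym2.mk x.1 x.2)
      (s := univ.filter (fun x : V × V => x.1 ≠ x.2 ∧ G.dist x.1 x.2 ≤ i))
      (t := univ.filter (fun p : Sym2 V => ¬ p.IsDiag ∧ pairDist G p ≤ i))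
      (fun ⦃x⦄ hx => by
        obtain ⟨a, b⟩ := x
        simp only [Finset.mem_coe, Finset.mem_filter, Finset.mem_univ, true_and] at hx ⊢
        exact ⟨by simpa using hx.1, by simpa [pairDist] using hx.2⟩)]
  rw [Finset.sum_congr rfl (fun p hp => ?_), Finset.sum_const, smul_eq_mul, mul_comm]
  · induction p using Sym2.ind with
    | _ u v =>
      simp only [Finset.mem_filter, Sym2.isDiag_iff_proj_eq] at hp
      have huv : u ≠ v := hp.2.1
      have hd : G.dist u v ≤ i := by simpa [pairDist] using hp.2.2
      have hset : (univ.filter (fun x : V × V => x.1 ≠ x.2 ∧ G.dist x.1 x.2 ≤ i)).filter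
          (fun x => Sym2.mk x.1 x.2 = s(u,v)) = {(u,v), (v,u)} := by
        ext ⟨a, b⟩
        simp only [Finset.mem_filter, Finset.mem_univ, true_and, Finset.mem_insert,
          Finset.mem_singleton, Sym2.eq, Sym2.rel_iff', Prod.mk.injEq, Prod.ext_iff]
        constructor
        · rintro ⟨-, h⟩
          exact h
        · rintro (⟨rfl, rfl⟩ | ⟨rfl, rfl⟩)
          · exact ⟨⟨huv, hd⟩, Or.inl ⟨rfl, rfl⟩⟩
          · exact ⟨⟨huv.symm, by rwa [SimpleGraph.dist_comm]⟩, Or.inr ⟨rfl, rfl⟩⟩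
      rw [hset, Finset.card_insert_of_notMem (by simp [Prod.ext_iff, huv]),
        Finset.card_singleton]

lemma dist_lt_card {V : Type*} [Fintype V] {G : SimpleGraph V} (hc : G.Connected) (u v : V) :
    G.dist u v < Fintype.card V := by
  obtain ⟨p, hp, hl⟩ := hc.exists_path_of_dist u v
  rw [← hl]
  exact hp.length_lt

lemma pair_bounds {V : Type*} [Fintype V] [DecidableEq V] {G : SimpleGraph V}
    (hc : G.Connected) (n : ℕ) (hn : Fintype.card V ≤ n) :
    ∀ p : Sym2 V, ¬ p.IsDiag → 1 ≤ pairDist G p ∧ pairDist G p ≤ n := by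
  intro p
  induction p using Sym2.ind with
  | _ u v =>
    intro hdiag
    rw [Sym2.isDiag_iff_proj_eq] at hdiag
    have h1 : 0 < G.dist u v := hc.pos_dist_of_ne hdiag
    have h2 : G.dist u v < Fintype.card V := dist_lt_card hc u v
    have hpd : pairDist G s(u,v) = G.dist u v := by simp [pairDist]
    rw [hpd]
    omega

lemma walk_in_ball {V : Type*} {G : SimpleGraph V} (hc : G.Connected) (u : V) (i : ℕ)
    (T : Set V) (hT : ∀ y ∈ T, G.dist u y ≤ i + 1 → G.dist u y ≤ i) :
    ∀ {a b : T} (_ : (G.induce T).Walk a b), G.dist u a ≤ i → G.dist u b ≤ i := by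
  intro a b W
  induction W with
  | nil => exact id
  | @cons x y z h q ih =>
    intro hx
    have hadj : G.Adj x.1 y.1 := h
    have h1 : G.dist x.1 y.1 = 1 := SimpleGraph.dist_eq_one_iff_adj.mpr hadj
    have htri : G.dist u y.1 ≤ G.dist u x.1 + G.dist x.1 y.1 := hc.dist_triangle
    have hy : G.dist u y.1 ≤ i := hT y.1 y.2 (by omega)
    exact ih hy

lemma ball_growth {V : Type*} [Fintype V] [DecidableEq V] {G : SimpleGraph V} {κ : ℕ}
    (hκ : 0 < κ) (hG : KConnected G κ) (u : V) (i : ℕ) :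
    min (Fintype.card V) (1 + κ * i) ≤ (univ.filter (fun v => G.dist u v ≤ i)).card := by
  have hc : G.Connected := kconn_connected hκ hG
  induction i with
  | zero =>
    have hu : u ∈ univ.filter (fun v => G.dist u v ≤ 0) := by
      simp [SimpleGraph.dist_self]
    have h1 : 1 ≤ (univ.filter (fun v => G.dist u v ≤ 0)).card :=
      Finset.card_pos.mpr ⟨u, hu⟩
    omega
  | succ i ih =>
    set Bi := univ.filter (fun v => G.dist u v ≤ i) with hBi
    set B' := univ.filter (fun v => G.dist u v ≤ i + 1) with hB'
    have hsub : Bi ⊆ B' := by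
      intro v hv
      simp only [hBi, hB', Finset.mem_filter, Finset.mem_univ, true_and] at hv ⊢
      omega
    by_cases hall : B' = univ
    · rw [hall, Finset.card_univ]
      omega
    · obtain ⟨w, hw⟩ : ∃ w, w ∉ B' := by
        by_contra hcon
        push_neg at hcon
        exact hall (Finset.eq_univ_iff_forall.mpr hcon)
      have hwdist : ¬ G.dist u w ≤ i + 1 := by
        intro h; exact hw (by simp [hB', h])
      have hu_mem : u ∈ Bi := by simp [hBi, SimpleGraph.dist_self]
      have hshell : κ ≤ (B' \ Bi).card := by
        by_contra hlt
        push_neg at hlt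
        have hconn := hG.2 (B' \ Bi) hlt
        set T : Set V := ((↑(B' \ Bi) : Set V)ᶜ) with hTdef
        have huT : u ∈ T := by
          simp only [hTdef, Set.mem_compl_iff, Finset.mem_coe, Finset.mem_sdiff]
          exact fun h => h.2 hu_mem
        have hwT : w ∈ T := by
          simp only [hTdef, Set.mem_compl_iff, Finset.mem_coe, Finset.mem_sdiff]
          exact fun h => hw h.1
        obtain ⟨W⟩ := hconn ⟨u, huT⟩ ⟨w, hwT⟩
        have hkey : ∀ y ∈ T, G.dist u y ≤ i + 1 → G.dist u y ≤ i := by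
          intro y hyT hy1
          by_contra hyi
          apply hyT
          simp only [Finset.mem_coe, Finset.mem_sdiff]
          exact ⟨by simp [hB', hy1], by simp [hBi, hyi]⟩
        have hfin := walk_in_ball hc u i T hkey W
          (by show G.dist u u ≤ i; simp [SimpleGraph.dist_self])
        have hfin' : G.dist u w ≤ i := hfin
        omega
      have hcard : Bi.card + (B' \ Bi).card = B'.card := by
        rw [add_comm]
        exact Finset.card_sdiff_add_card_eq_card hsub
      have hBi_lt : ¬ (Fintype.card V ≤ 1 + κ * i) := by
        intro hle
        have h2 : Fintype.card V ≤ Bi.card := by omega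
        have h3 : Bi = univ := Finset.eq_univ_of_card Bi
          (le_antisymm (Finset.card_le_univ _) h2)
        exact hall (Finset.eq_univ_iff_forall.mpr fun v => hsub (h3 ▸ Finset.mem_univ v))
      have hmul : κ * (i + 1) = κ * i + κ := by ring
      omega

lemma dist_le_mul {W : Type*} {G H : SimpleGraph W} (hGc : G.Connected) (k : ℕ)
    (hadj : ∀ a b, H.Adj a b → G.dist a b ≤ k) (hH : H.Connected) (u v : W) :
    G.dist u v ≤ k * H.dist u v := by
  obtain ⟨p, hp⟩ := (hH u v).exists_walk_length_eq_dist
  rw [← hp]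
  clear hp
  induction p with
  | nil => simp [SimpleGraph.dist_self]
  | @cons a c b h q ih =>
    calc G.dist a b ≤ G.dist a c + G.dist c b := hGc.dist_triangle
    _ ≤ k + k * q.length := add_le_add (hadj _ _ h) ih
    _ = k * (q.length + 1) := by ring
    _ = k * (SimpleGraph.Walk.cons h q).length := by rw [SimpleGraph.Walk.length_cons]

open Fin.CommRing in
lemma cycle_walk_displacement {n : ℕ} [NeZero n] (hn : 2 ≤ n) :
    ∀ {a b : Fin n} (p : (SimpleGraph.cycleGraph n).Walk a b),
      ∃ j : ℤ, j.natAbs ≤ p.length ∧ b = a + (j : Fin n) := by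
  intro a b p
  induction p with
  | nil => exact ⟨0, by simp⟩
  | @cons a c b h q ih =>
    obtain ⟨j, hj, hbc⟩ := ih
    rw [SimpleGraph.cycleGraph_adj'] at h
    have hone : (1 : Fin n).val = 1 := by
      rw [Fin.val_one']
      exact Nat.mod_eq_of_lt (by omega)
    rcases h with h | h
    · have hac : a - c = 1 := by
        apply Fin.ext
        rw [h, hone]
      have hc : c = a + ((-1 : ℤ) : Fin n) := by
        push_cast
        rw [← hac]; ring
      refine ⟨j - 1, by rw [SimpleGraph.Walk.length_cons]; omega, ?_⟩
      rw [hbc, hc]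
      push_cast
      ring
    · have hca : c - a = 1 := by
        apply Fin.ext
        rw [h, hone]
      have hc : c = a + ((1 : ℤ) : Fin n) := by
        push_cast
        rw [← hca]; ring
      refine ⟨j + 1, by rw [SimpleGraph.Walk.length_cons]; omega, ?_⟩
      rw [hbc, hc]
      push_cast
      ring

open Fin.CommRing in
lemma cycle_ball_card {n : ℕ} [NeZero n] (hn : 2 ≤ n) (u : Fin n) (m : ℕ) :
    (univ.filter (fun v : Fin n => u ≠ v ∧ (SimpleGraph.cycleGraph n).dist u v ≤ m)).card
      ≤ 2 * m := by
  classical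
  set f : ℤ → Fin n := fun j => u + (j : Fin n) with hf
  have hsub : univ.filter (fun v : Fin n => u ≠ v ∧ (SimpleGraph.cycleGraph n).dist u v ≤ m)
      ⊆ ((Finset.Icc (-(m:ℤ)) m).image f).erase u := by
    intro v hv
    simp only [Finset.mem_filter, Finset.mem_univ, true_and] at hv
    obtain ⟨hne, hd⟩ := hv
    have hreach : (SimpleGraph.cycleGraph n).Reachable u v :=
      SimpleGraph.cycleGraph_preconnected u v
    obtain ⟨p, hp⟩ := hreach.exists_walk_length_eq_dist
    obtain ⟨j, hj, hv⟩ := cycle_walk_displacement hn p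
    rw [Finset.mem_erase]
    refine ⟨hne.symm, Finset.mem_image.mpr ⟨j, ?_, hv.symm⟩⟩
    rw [Finset.mem_Icc]
    rw [hp] at hj
    omega
  have humem : u ∈ (Finset.Icc (-(m:ℤ)) m).image f := by
    refine Finset.mem_image.mpr ⟨0, by simp, by simp [hf]⟩
  calc _ ≤ (((Finset.Icc (-(m:ℤ)) m).image f).erase u).card := Finset.card_le_card hsub
  _ = ((Finset.Icc (-(m:ℤ)) m).image f).card - 1 := Finset.card_erase_of_mem humem
  _ ≤ (Finset.Icc (-(m:ℤ)) m).card - 1 := by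
      have := Finset.card_image_le (s := Finset.Icc (-(m:ℤ)) m) (f := f)
      omega
  _ ≤ 2 * m := by
      rw [Int.card_Icc]
      omega

end Aux

/-- For even `κ > 0`, among `κ`-connected graphs with `n` vertices the `(κ/2)`-th
power of the cycle `C_n` minimises the Harary index. -/
theorem hararyIdx_cyclePower_le {V : Type*} [Fintype V] [DecidableEq V]
    (κ : ℕ) (hκ : 0 < κ) (hκeven : Even κ)
    (G : SimpleGraph V) (hG : KConnected G κ)
    (n : ℕ) (hcard : Fintype.card V = n) :
    hararyIdx (graphPow (SimpleGraph.cycleGraph n) (κ / 2)) ≤ hararyIdx G := by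
  obtain ⟨k, hk⟩ := hκeven
  subst hcard
  set n := Fintype.card V with hn
  have hkpos : 0 < k := by omega
  have hκn : κ < n := hG.1
  have hn3 : 3 ≤ n := by omega
  haveI : NeZero n := ⟨by omega⟩
  have hk2 : κ / 2 = k := by omega
  rw [hk2]
  have hGc : G.Connected := kconn_connected hκ hG
  set C := graphPow (SimpleGraph.cycleGraph n) k with hC
  have hcyc_conn : (SimpleGraph.cycleGraph n).Connected :=
    (SimpleGraph.connected_iff _).mpr
      ⟨SimpleGraph.cycleGraph_preconnected, ⟨⟨0, by omega⟩⟩⟩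
  have hle : SimpleGraph.cycleGraph n ≤ C := by
    intro a b h
    exact ⟨h.ne, le_trans (le_of_eq (SimpleGraph.dist_eq_one_iff_adj.mpr h)) hkpos⟩
  have hCc : C.Connected := hcyc_conn.mono hle
  rw [harary_eq C n (pair_bounds hCc n (by simp)),
      harary_eq G n (pair_bounds hGc n (le_of_eq hn.symm))]
  have hcards : ((univ.filter (fun p : Sym2 (Fin n) => ¬ p.IsDiag)).card : ℝ)
      = ((univ.filter (fun p : Sym2 V => ¬ p.IsDiag)).card : ℝ) := by
    norm_cast
    rw [← Fintype.card_subtype, ← Fintype.card_subtype,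
      Sym2.card_subtype_not_diag, Sym2.card_subtype_not_diag, Fintype.card_fin]
  refine add_le_add (le_of_eq (by rw [hcards])) (Finset.sum_le_sum fun i hi => ?_)
  rw [Finset.mem_Icc] at hi
  have h0 : (0:ℝ) < i := by exact_mod_cast hi.1
  have hc_nonneg : 0 ≤ 1/(i:ℝ) - 1/((i:ℝ)+1) := by
    have := one_div_le_one_div_of_le h0 (by linarith : (i:ℝ) ≤ (i:ℝ)+1)
    linarith
  refine mul_le_mul_of_nonneg_left ?_ hc_nonneg
  have key : (univ.filter (fun p : Sym2 (Fin n) => ¬ p.IsDiag ∧ pairDist C p ≤ i)).card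
      ≤ (univ.filter (fun p : Sym2 V => ¬ p.IsDiag ∧ pairDist G p ≤ i)).card := by
    have hCu : ∀ u : Fin n, (univ.filter (fun v => u ≠ v ∧ C.dist u v ≤ i)).card
        ≤ min (n-1) (κ*i) := by
      intro u
      refine le_min ?_ ?_
      · have hsub : univ.filter (fun v => u ≠ v ∧ C.dist u v ≤ i) ⊆ univ.erase u := by
          intro v hv
          simp only [Finset.mem_filter] at hv
          exact Finset.mem_erase.mpr ⟨hv.2.1.symm, Finset.mem_univ v⟩
        calc _ ≤ (univ.erase u).card := Finset.card_le_card hsub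
        _ = n - 1 := by
            rw [Finset.card_erase_of_mem (Finset.mem_univ u), Finset.card_univ,
              Fintype.card_fin]
      · have hsub : univ.filter (fun v => u ≠ v ∧ C.dist u v ≤ i)
            ⊆ univ.filter (fun v => u ≠ v ∧ (SimpleGraph.cycleGraph n).dist u v ≤ k * i) := by
          intro v hv
          simp only [Finset.mem_filter, Finset.mem_univ, true_and] at hv ⊢
          refine ⟨hv.1, ?_⟩
          have hCadj : ∀ a b : Fin n, C.Adj a b → (SimpleGraph.cycleGraph n).dist a b ≤ k :=
            fun a b h => h.2
          calc (SimpleGraph.cycleGraph n).dist u v ≤ k * C.dist u v :=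
            dist_le_mul hcyc_conn k hCadj hCc u v
          _ ≤ k * i := Nat.mul_le_mul_left k hv.2
        calc _ ≤ _ := Finset.card_le_card hsub
        _ ≤ 2 * (k * i) := cycle_ball_card (by omega) u (k * i)
        _ = κ * i := by rw [hk]; ring
    have hGu : ∀ u : V, min (n-1) (κ*i)
        ≤ (univ.filter (fun v => u ≠ v ∧ G.dist u v ≤ i)).card := by
      intro u
      have hball := ball_growth hκ hG u i
      have heq : univ.filter (fun v => u ≠ v ∧ G.dist u v ≤ i)
          = (univ.filter (fun v => G.dist u v ≤ i)).erase u := by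
        ext v
        simp only [Finset.mem_filter, Finset.mem_erase, Finset.mem_univ, true_and]
        constructor
        · rintro ⟨h1, h2⟩; exact ⟨h1.symm, h2⟩
        · rintro ⟨h1, h2⟩; exact ⟨h1.symm, h2⟩
      rw [heq, Finset.card_erase_of_mem (by simp [SimpleGraph.dist_self])]
      omega
    have h2C := pair_count C i
    have h2G := pair_count G i
    have hsumC : ∑ u : Fin n, (univ.filter (fun v => u ≠ v ∧ C.dist u v ≤ i)).card
        ≤ n * min (n-1) (κ*i) := by
      calc _ ≤ ∑ _u : Fin n, min (n-1) (κ*i) := Finset.sum_le_sum fun u _ => hCu u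
      _ = n * min (n-1) (κ*i) := by
          rw [Finset.sum_const, Finset.card_univ, Fintype.card_fin, smul_eq_mul]
    have hsumG : n * min (n-1) (κ*i)
        ≤ ∑ u : V, (univ.filter (fun v => u ≠ v ∧ G.dist u v ≤ i)).card := by
      calc n * min (n-1) (κ*i) = ∑ _u : V, min (n-1) (κ*i) := by
            rw [Finset.sum_const, Finset.card_univ, ← hn, smul_eq_mul]
      _ ≤ _ := Finset.sum_le_sum fun u _ => hGu u
    omega
  exact_mod_cast key
end
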